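/- arXiv:1909.04103 — 8 statements merged into one kernel-verified Lean document; each statement's English description precedes it below -/
import Mathlib

section
/- Let q₁ and q₂ be PIBQFs with discriminants D₁ and D₂. There exists exactly one point z in the upper half-plane lying on both root geodesics ℓ_{q₁} and ℓ_{q₂} if and only if B_Δ(q₁,q₂)² < D₁D₂. -/
/-- A binary quadratic form `[A,B,C]`, encoded as a triple of integers. -/
abbrev BQF := ℤ × ℤ × ℤ

/-- The discriminant `B² - 4AC` of a binary quadratic form `[A,B,C]`. -/
def disc (q : BQF) : ℤ := q.2.1 ^ 2 - 4 * q.1 * q.2.2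

/-- A binary quadratic form is primitive if `gcd(A,B,C) = 1`. -/
def IsPrimitiveBQF (q : BQF) : Prop := Int.gcd q.1 (Int.gcd q.2.1 q.2.2) = 1

/-- A primitive indefinite binary quadratic form: primitive, of positive
nonsquare discriminant. -/
def IsPIBQF (q : BQF) : Prop := IsPrimitiveBQF q ∧ 0 < disc q ∧ ¬ IsSquare (disc q)

abbrev SL2Z := Matrix.SpecialLinearGroup (Fin 2) ℤ

/-- The action of `SL(2,ℤ)` on binary quadratic forms:
`(γ ∘ q)(x,y) = q(ax + by, cx + dy)`. -/
def actForm (γ : SL2Z) (q : BQF) : BQF :=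
  ((q.1 * (γ.1 0 0)^2 + q.2.1 * (γ.1 0 0) * (γ.1 1 0) + q.2.2 * (γ.1 1 0)^2),
   (2 * q.1 * (γ.1 0 0) * (γ.1 0 1) + q.2.1 * ((γ.1 0 0) * (γ.1 1 1) + (γ.1 0 1) * (γ.1 1 0))
      + 2 * q.2.2 * (γ.1 1 0) * (γ.1 1 1)),
   (q.1 * (γ.1 0 1)^2 + q.2.1 * (γ.1 0 1) * (γ.1 1 1) + q.2.2 * (γ.1 1 1)^2))

/-- Equivalence of binary quadratic forms under `SL(2,ℤ)`. -/
def equivF (q q' : BQF) : Prop := ∃ γ : SL2Z, actForm γ q = q'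

/-- `B_Δ(q₁,q₂) = B₁B₂ - 2A₁C₂ - 2A₂C₁`. -/
def BΔ (q₁ q₂ : BQF) : ℤ := q₁.2.1 * q₂.2.1 - 2 * q₁.1 * q₂.2.2 - 2 * q₂.1 * q₁.2.2

/-- A fundamental discriminant. -/
def IsFundamentalDisc (D : ℤ) : Prop :=
  (D % 4 = 1 ∧ Squarefree D) ∨
    (∃ m : ℤ, D = 4 * m ∧ Squarefree m ∧ (m % 4 = 2 ∨ m % 4 = 3))

/-- The Kronecker symbol `(a / p)` for a prime `p`. -/
def kron (a : ℤ) (p : ℕ) : ℤ :=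
  if p = 2 then (if a % 2 = 0 then 0 else if a % 8 = 1 ∨ a % 8 = 7 then 1 else -1)
  else jacobiSym a p

/-- `ε(p)`: the nonzero value among the Kronecker symbols `(D₁/p)`, `(D₂/p)`. -/
def epsP (D₁ D₂ : ℤ) (p : ℕ) : ℤ := if kron D₁ p = 0 then kron D₂ p else kron D₁ p

/-- The multiplicative extension of `ε` to positive integers. -/
def epsMul (D₁ D₂ : ℤ) (d : ℕ) : ℤ :=
  d.factorization.prod fun p k => (epsP D₁ D₂ p) ^ k

/-- Pairs of primitive forms of discriminants `D₁, D₂` with `B_Δ = n`. -/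
def PairSet (D₁ D₂ n : ℤ) : Type :=
  {p : BQF × BQF // IsPrimitiveBQF p.1 ∧ IsPrimitiveBQF p.2 ∧
    disc p.1 = D₁ ∧ disc p.2 = D₂ ∧ BΔ p.1 p.2 = n}

/-- Simultaneous `SL(2,ℤ)`-equivalence of pairs. -/
def pairRel (D₁ D₂ n : ℤ) (x y : PairSet D₁ D₂ n) : Prop :=
  ∃ γ : SL2Z, actForm γ x.1.1 = y.1.1 ∧ actForm γ x.1.2 = y.1.2

/-- `p(n)`: the number of simultaneous equivalence classes of pairs of primitive
forms of discriminants `D₁, D₂` with `B_Δ = n`. -/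
noncomputable def pCount (D₁ D₂ n : ℤ) : ℕ := Nat.card (Quot (pairRel D₁ D₂ n))

/-- The root geodesic of an indefinite form, as a subset of the upper half plane. -/
def rootGeodesic (q : BQF) : Set ℂ :=
  {z : ℂ | 0 < z.im ∧
    (q.1 : ℝ) * Complex.normSq z + (q.2.1 : ℝ) * z.re + (q.2.2 : ℝ) = 0}

/-- The first root `(-B + √D)/(2A)` of a PIBQF. -/
noncomputable def firstRoot (q : BQF) : ℝ :=
  (-(q.2.1 : ℝ) + Real.sqrt (disc q)) / (2 * q.1)

/-- The second root `(-B - √D)/(2A)` of a PIBQF. -/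
noncomputable def secondRoot (q : BQF) : ℝ :=
  (-(q.2.1 : ℝ) - Real.sqrt (disc q)) / (2 * q.1)

/-!
At a common point `x + iy` of the two semicircles put `βᵢ = Bᵢ + 2Aᵢx`. The circle equations give
`Dᵢ = βᵢ² + 4Aᵢ²y²` and `B_Δ = β₁β₂ + 4A₁A₂y²`, so Lagrange's identity yields
`D₁D₂ - B_Δ² = 4y²(A₂B₁ - A₁B₂)²`. Subtracting the circle equations gives the radical axis
`(A₂B₁ - A₁B₂)x + (A₂C₁ - A₁C₂) = 0`. If `A₂B₁ = A₁B₂` the circles are concentric, hence disjoint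
or equal, and `D₁D₂ - B_Δ² ≤ 0`; otherwise the radical axis fixes `x` and either circle fixes `y²`.
-/

lemma IsPIBQF.fst_ne_zero {q : BQF} (h : IsPIBQF q) : q.1 ≠ 0 := by
  intro hA
  exact h.2.2 ⟨q.2.1, by simp [disc, hA, sq]⟩

/-- `t` stands for `y²`, so that the equation can be solved for the height. -/
def geodesicPoly (q : BQF) (x t : ℝ) : ℝ := q.1 * (x ^ 2 + t) + q.2.1 * x + q.2.2

lemma mem_rootGeodesic_iff {q : BQF} {z : ℂ} :
    z ∈ rootGeodesic q ↔ 0 < z.im ∧ geodesicPoly q z.re (z.im ^ 2) = 0 := by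
  simp only [rootGeodesic, geodesicPoly, Set.mem_ofPred_eq, Complex.normSq_apply, sq]

/-- `crossAB q₁ q₂ * x + crossAC q₁ q₂ = 0` is the radical axis of the two root geodesics. -/
def crossAB (q₁ q₂ : BQF) : ℤ := q₂.1 * q₁.2.1 - q₁.1 * q₂.2.1

def crossAC (q₁ q₂ : BQF) : ℤ := q₂.1 * q₁.2.2 - q₁.1 * q₂.2.2

lemma geodesicPoly_sub_geodesicPoly (q₁ q₂ : BQF) (x t : ℝ) :
    q₂.1 * geodesicPoly q₁ x t - q₁.1 * geodesicPoly q₂ x t =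
      crossAB q₁ q₂ * x + crossAC q₁ q₂ := by
  simp only [geodesicPoly, crossAB, crossAC]
  push_cast
  ring

lemma rootGeodesic_nontrivial {q : BQF} (hA : q.1 ≠ 0) (hD : 0 < disc q) :
    (rootGeodesic q).Nontrivial := by
  have hA' : (q.1 : ℝ) ≠ 0 := Int.cast_ne_zero.mpr hA
  set c : ℝ := -q.2.1 / (2 * q.1)
  set r : ℝ := √(disc q / (4 * q.1 ^ 2))
  have hr : 0 < r := Real.sqrt_pos.mpr (by positivity)
  have hr2 : r ^ 2 = disc q / (4 * q.1 ^ 2) := Real.sq_sqrt (by positivity)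
  have hcenter : geodesicPoly q c (r ^ 2) = 0 := by
    rw [hr2]; simp only [geodesicPoly, c, disc]; push_cast; field_simp; ring
  have hslope : 2 * q.1 * c + q.2.1 = 0 := by
    simp only [c]; field_simp; ring
  -- the 3-4-5 triangle gives a second point on the semicircle
  have hother : geodesicPoly q (c + 3 * r / 5) ((4 * r / 5) ^ 2) = 0 := by
    simp only [geodesicPoly] at hcenter ⊢
    linear_combination hcenter + (3 * r / 5) * hslope
  refine ⟨⟨c, r⟩, mem_rootGeodesic_iff.mpr ⟨hr, hcenter⟩,
    ⟨c + 3 * r / 5, 4 * r / 5⟩, mem_rootGeodesic_iff.mpr ⟨by positivity, hother⟩, ?_⟩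
  intro h
  exact (by linarith : r ≠ 4 * r / 5) (congrArg Complex.im h)

section

variable {q₁ q₂ : BQF} {x t : ℝ}

lemma radicalAxis_of_geodesicPoly_eq_zero (h₁ : geodesicPoly q₁ x t = 0)
    (h₂ : geodesicPoly q₂ x t = 0) : (crossAB q₁ q₂ : ℝ) * x + crossAC q₁ q₂ = 0 := by
  rw [← geodesicPoly_sub_geodesicPoly, h₁, h₂]
  ring

lemma disc_mul_disc_sub_BΔ_sq_of_geodesicPoly_eq_zero (h₁ : geodesicPoly q₁ x t = 0)
    (h₂ : geodesicPoly q₂ x t = 0) :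
    ((disc q₁ * disc q₂ - BΔ q₁ q₂ ^ 2 : ℤ) : ℝ) = 4 * t * (crossAB q₁ q₂ : ℝ) ^ 2 := by
  obtain ⟨a₁, b₁, c₁⟩ := q₁
  obtain ⟨a₂, b₂, c₂⟩ := q₂
  simp only [geodesicPoly] at h₁ h₂
  have hD₁ : ((disc (a₁, b₁, c₁) : ℤ) : ℝ) = (b₁ + 2 * a₁ * x) ^ 2 + 4 * a₁ ^ 2 * t := by
    simp only [disc]; push_cast
    linear_combination (-4 * (a₁ : ℝ)) * h₁
  have hD₂ : ((disc (a₂, b₂, c₂) : ℤ) : ℝ) = (b₂ + 2 * a₂ * x) ^ 2 + 4 * a₂ ^ 2 * t := by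
    simp only [disc]; push_cast
    linear_combination (-4 * (a₂ : ℝ)) * h₂
  have hB : ((BΔ (a₁, b₁, c₁) (a₂, b₂, c₂) : ℤ) : ℝ) =
      (b₁ + 2 * a₁ * x) * (b₂ + 2 * a₂ * x) + 4 * a₁ * a₂ * t := by
    simp only [BΔ]; push_cast
    linear_combination (-2 * (a₂ : ℝ)) * h₁ + (-2 * (a₁ : ℝ)) * h₂
  push_cast [crossAB] at hD₁ hD₂ hB ⊢
  rw [hD₁, hD₂, hB]
  ring

lemma crossAB_ne_zero_of_BΔ_sq_lt (h : BΔ q₁ q₂ ^ 2 < disc q₁ * disc q₂) : crossAB q₁ q₂ ≠ 0 := by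
  intro hE
  have hid : disc q₁ * disc q₂ - BΔ q₁ q₂ ^ 2 = -4 * crossAC q₁ q₂ ^ 2
      - 4 * crossAB q₁ q₂ * (q₁.2.1 * q₂.2.2 - q₂.2.1 * q₁.2.2) := by
    simp only [disc, BΔ, crossAB, crossAC]
    ring
  rw [hE] at hid
  nlinarith [sq_nonneg (crossAC q₁ q₂)]

lemma rootGeodesic_eq_of_crossAB_eq_zero (hA₁ : q₁.1 ≠ 0) (hA₂ : q₂.1 ≠ 0)
    (hE : crossAB q₁ q₂ = 0) (hF : crossAC q₁ q₂ = 0) : rootGeodesic q₁ = rootGeodesic q₂ := by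
  ext z
  have hprop : (q₂.1 : ℝ) * geodesicPoly q₁ z.re (z.im ^ 2) =
      q₁.1 * geodesicPoly q₂ z.re (z.im ^ 2) := by
    have h := geodesicPoly_sub_geodesicPoly q₁ q₂ z.re (z.im ^ 2)
    rw [hE, hF] at h
    push_cast at h
    linear_combination h
  rw [mem_rootGeodesic_iff, mem_rootGeodesic_iff,
    ← mul_eq_zero_iff_left (Int.cast_ne_zero.mpr hA₂ : (q₂.1 : ℝ) ≠ 0), hprop,
    mul_eq_zero_iff_left (Int.cast_ne_zero.mpr hA₁ : (q₁.1 : ℝ) ≠ 0)]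

lemma BΔ_sq_lt_of_existsUnique_mem_rootGeodesic (hA₁ : q₁.1 ≠ 0) (hA₂ : q₂.1 ≠ 0)
    (hD₁ : 0 < disc q₁) (h : ∃! z : ℂ, z ∈ rootGeodesic q₁ ∧ z ∈ rootGeodesic q₂) :
    BΔ q₁ q₂ ^ 2 < disc q₁ * disc q₂ := by
  obtain ⟨z, ⟨hz₁, hz₂⟩, huniq⟩ := h
  rw [mem_rootGeodesic_iff] at hz₁ hz₂
  have hE : crossAB q₁ q₂ ≠ 0 := by
    intro hE
    have hF : crossAC q₁ q₂ = 0 := by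
      have h := radicalAxis_of_geodesicPoly_eq_zero hz₁.2 hz₂.2
      rw [hE] at h
      exact_mod_cast (by simpa using h)
    obtain ⟨w₁, hw₁, w₂, hw₂, hne⟩ := rootGeodesic_nontrivial hA₁ hD₁
    have heq := rootGeodesic_eq_of_crossAB_eq_zero hA₁ hA₂ hE hF
    exact hne ((huniq w₁ ⟨hw₁, heq ▸ hw₁⟩).trans (huniq w₂ ⟨hw₂, heq ▸ hw₂⟩).symm)
  have hpos : (0 : ℝ) < 4 * z.im ^ 2 * (crossAB q₁ q₂ : ℝ) ^ 2 := by
    have := hz₁.1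
    positivity
  rw [← disc_mul_disc_sub_BΔ_sq_of_geodesicPoly_eq_zero hz₁.2 hz₂.2] at hpos
  exact sub_pos.mp (by exact_mod_cast hpos)

lemma existsUnique_mem_rootGeodesic_of_BΔ_sq_lt (hA₁ : q₁.1 ≠ 0)
    (h : BΔ q₁ q₂ ^ 2 < disc q₁ * disc q₂) :
    ∃! z : ℂ, z ∈ rootGeodesic q₁ ∧ z ∈ rootGeodesic q₂ := by
  have hE : (crossAB q₁ q₂ : ℝ) ≠ 0 := by exact_mod_cast crossAB_ne_zero_of_BΔ_sq_lt h
  have hA₁' : (q₁.1 : ℝ) ≠ 0 := by exact_mod_cast hA₁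
  set x₀ : ℝ := -crossAC q₁ q₂ / crossAB q₁ q₂
  set t₀ : ℝ := -(q₁.1 * x₀ ^ 2 + q₁.2.1 * x₀ + q₁.2.2) / q₁.1
  have h₁ : geodesicPoly q₁ x₀ t₀ = 0 := by
    simp only [geodesicPoly, t₀]
    field_simp
    ring
  have h₂ : geodesicPoly q₂ x₀ t₀ = 0 := by
    have haxis : (crossAB q₁ q₂ : ℝ) * x₀ + crossAC q₁ q₂ = 0 := by
      simp only [x₀]
      field_simp
      ring
    have h := geodesicPoly_sub_geodesicPoly q₁ q₂ x₀ t₀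
    rw [h₁, haxis] at h
    simpa [hA₁'] using h
  have ht₀ : 0 < t₀ := by
    have hpos : (0 : ℝ) < ((disc q₁ * disc q₂ - BΔ q₁ q₂ ^ 2 : ℤ) : ℝ) := by
      exact_mod_cast sub_pos.mpr h
    rw [disc_mul_disc_sub_BΔ_sq_of_geodesicPoly_eq_zero h₁ h₂] at hpos
    linarith [pos_of_mul_pos_left hpos (sq_nonneg _)]
  have hmem : (⟨x₀, √t₀⟩ : ℂ) ∈ rootGeodesic q₁ ∧ (⟨x₀, √t₀⟩ : ℂ) ∈ rootGeodesic q₂ := by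
    simp only [mem_rootGeodesic_iff, Real.sq_sqrt ht₀.le, Real.sqrt_pos.mpr ht₀]
    exact ⟨⟨trivial, h₁⟩, trivial, h₂⟩
  refine ⟨⟨x₀, √t₀⟩, hmem, ?_⟩
  rintro w ⟨hw₁, hw₂⟩
  rw [mem_rootGeodesic_iff] at hw₁ hw₂
  have hre : w.re = x₀ := by
    rw [eq_div_iff hE]
    linear_combination radicalAxis_of_geodesicPoly_eq_zero hw₁.2 hw₂.2
  have him : w.im ^ 2 = t₀ := by
    have h := hw₁.2
    rw [hre] at h
    simp only [geodesicPoly] at h h₁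
    exact mul_left_cancel₀ hA₁' (by linear_combination h - h₁)
  exact Complex.ext hre (by rw [← him, Real.sqrt_sq hw₁.1.le])

end

/-- Proposition 5(i) of the paper.
The root geodesics of two PIBQFs `q₁, q₂` meet in exactly one point of the
upper half plane iff `B_Δ(q₁,q₂)² < D₁D₂`. -/
theorem rootGeodesics_unique_intersection_iff
    (q₁ q₂ : BQF) (h₁ : IsPIBQF q₁) (h₂ : IsPIBQF q₂) :
    (∃! z : ℂ, z ∈ rootGeodesic q₁ ∧ z ∈ rootGeodesic q₂) ↔
      (BΔ q₁ q₂) ^ 2 < disc q₁ * disc q₂ :=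
  ⟨BΔ_sq_lt_of_existsUnique_mem_rootGeodesic h₁.fst_ne_zero h₂.fst_ne_zero h₁.2.1,
    existsUnique_mem_rootGeodesic_of_BΔ_sq_lt h₁.fst_ne_zero⟩
end

section
/- Let q₁ = [A₁,B₁,C₁] and q₂ = [A₂,B₂,C₂] be PIBQFs with discriminants D₁, D₂ satisfying B_Δ(q₁,q₂)² < D₁D₂. Then (B₁A₂ − B₂A₁)·(B₂C₁ − B₁C₂) > 0; in particular B₁A₂ − B₂A₁ and B₂C₁ − B₁C₂ are nonzero and have the same sign. -/
theorem disc_mul_disc_sub_BΔ_sq (q₁ q₂ : BQF) :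
    disc q₁ * disc q₂ - BΔ q₁ q₂ ^ 2 =
      4 * ((q₁.2.1 * q₂.1 - q₂.2.1 * q₁.1) * (q₂.2.1 * q₁.2.2 - q₁.2.1 * q₂.2.2)
        - (q₂.1 * q₁.2.2 - q₁.1 * q₂.2.2) ^ 2) := by
  simp only [disc, BΔ]
  ring

theorem sign_product_pos_of_intersecting_general
    (q₁ q₂ : BQF)
    (h : (BΔ q₁ q₂) ^ 2 < disc q₁ * disc q₂) :
    0 < (q₁.2.1 * q₂.1 - q₂.2.1 * q₁.1) * (q₂.2.1 * q₁.2.2 - q₁.2.1 * q₂.2.2) := by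
  linarith [disc_mul_disc_sub_BΔ_sq q₁ q₂, sq_nonneg (q₂.1 * q₁.2.2 - q₁.1 * q₂.2.2)]

/-- from Proposition 5(ii) of the paper.
If the root geodesics of PIBQFs `q₁ = [A₁,B₁,C₁]`, `q₂ = [A₂,B₂,C₂]` intersect
(`B_Δ² < D₁D₂`), then `(B₁A₂ - B₂A₁)(B₂C₁ - B₁C₂) > 0`. -/
theorem sign_product_pos_of_intersecting
    (q₁ q₂ : BQF) (h₁ : IsPIBQF q₁) (h₂ : IsPIBQF q₂)
    (h : (BΔ q₁ q₂) ^ 2 < disc q₁ * disc q₂) :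
    0 < (q₁.2.1 * q₂.1 - q₂.2.1 * q₁.1) * (q₂.2.1 * q₁.2.2 - q₁.2.1 * q₂.2.2) :=
  sign_product_pos_of_intersecting_general q₁ q₂ h
end

section
/- Let q₁ = [A₁,B₁,C₁] and q₂ = [A₂,B₂,C₂] be PIBQFs with discriminants D₁, D₂, let x = B_Δ(q₁,q₂), and let q₃ := [A₂B₁ − A₁B₂, 2A₂C₁ − 2A₁C₂, B₂C₁ − B₁C₂]. Then the discriminant of q₃ equals x² − D₁D₂; moreover, if x² < D₁D₂, then q₃ is a (negative-discriminant) form whose unique complex root z with Im z > 0 of q₃(z,1) = 0 is the unique point of the upper half-plane lying on both root geodesics ℓ_{q₁} and ℓ_{q₂}. -/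
/-!
Both conditions on a point `w = x + iy` of the upper half plane reduce to the same pair of
equations `2a x + b = 0`, `a |w|² = c`, where `[a, b, c] = q₃`. For a root of `q₃(w, 1)`,
these are the imaginary part divided by `y` and the real part after eliminating `b x`. For the
two geodesic equations `Aᵢ |w|² + Bᵢ x + Cᵢ = 0`, they are the combinations eliminating `|w|²`
and `x`, an invertible change of equations because its determinant is `a`. When
`b² - 4ac = B_Δ² - D₁D₂ < 0`, the pair has exactly one solution with `y > 0`.
-/

open Complex

def crossForm (q₁ q₂ : BQF) : BQF :=
  (q₂.1 * q₁.2.1 - q₁.1 * q₂.2.1,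
   2 * q₂.1 * q₁.2.2 - 2 * q₁.1 * q₂.2.2,
   q₂.2.1 * q₁.2.2 - q₁.2.1 * q₂.2.2)

theorem disc_crossForm (q₁ q₂ : BQF) :
    disc (crossForm q₁ q₂) = BΔ q₁ q₂ ^ 2 - disc q₁ * disc q₂ := by
  simp only [disc, BΔ, crossForm]
  ring

theorem ne_zero_of_discrim_neg {R : Type*} [CommRing R] [LinearOrder R] [IsStrictOrderedRing R]
    {a b c : R} (h : discrim a b c < 0) : a ≠ 0 := by
  rintro rfl
  rw [discrim, mul_zero, zero_mul, sub_zero] at h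
  exact (sq_nonneg b).not_gt h

section UpperHalfPlane

variable {a b c : ℝ}

theorem quadratic_eq_zero_iff_of_im_ne_zero {w : ℂ} (hw : w.im ≠ 0) :
    (a : ℂ) * w ^ 2 + b * w + c = 0 ↔ 2 * a * w.re + b = 0 ∧ a * normSq w = c := by
  rw [Complex.ext_iff, normSq_apply]
  simp only [pow_two, add_re, add_im, mul_re, mul_im, ofReal_re, ofReal_im, zero_re, zero_im,
    zero_mul, sub_zero, add_zero]
  constructor
  · rintro ⟨hre, him⟩
    have hlin : 2 * a * w.re + b = 0 := by
      refine (mul_eq_zero.mp ?_).resolve_right hw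
      linear_combination him
    exact ⟨hlin, by linear_combination -hre + w.re * hlin⟩
  · rintro ⟨hlin, hnorm⟩
    exact ⟨by linear_combination -hnorm + w.re * hlin, by linear_combination w.im * hlin⟩

theorem existsUnique_im_pos_of_discrim_neg (h : discrim a b c < 0) :
    ∃ z : ℂ, 0 < z.im ∧
      ∀ w : ℂ, (0 < w.im ∧ 2 * a * w.re + b = 0 ∧ a * normSq w = c) ↔ w = z := by
  have ha := ne_zero_of_discrim_neg h
  set x := -b / (2 * a)
  have hx : 2 * a * x + b = 0 := by
    simp only [x]
    field_simp
    ring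
  have hpos : 0 < c / a - x ^ 2 := by
    have hsq : c / a - x ^ 2 = -discrim a b c / (4 * a ^ 2) := by
      simp only [x, discrim]
      field_simp
      ring
    rw [hsq]
    exact div_pos (neg_pos.mpr h) (by positivity)
  refine ⟨⟨x, √(c / a - x ^ 2)⟩, Real.sqrt_pos.mpr hpos, fun w => ⟨?_, ?_⟩⟩
  · rintro ⟨him, hlin, hnorm⟩
    have hre : w.re = x := mul_left_cancel₀ (mul_ne_zero two_ne_zero ha) (by linarith)
    have him_sq : w.im ^ 2 = c / a - x ^ 2 := by
      rw [normSq_apply, hre] at hnorm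
      field_simp
      linear_combination hnorm
    refine Complex.ext hre ?_
    rw [← him_sq, Real.sqrt_sq him.le]
  · rintro rfl
    refine ⟨Real.sqrt_pos.mpr hpos, hx, ?_⟩
    rw [normSq_mk, ← sq, ← sq, Real.sq_sqrt hpos.le]
    field_simp
    ring

end UpperHalfPlane

theorem pencil_eq_zero_iff {K : Type*} [Field K] [NeZero (2 : K)]
    {A₁ B₁ C₁ A₂ B₂ C₂ n x : K} (ha : A₂ * B₁ - A₁ * B₂ ≠ 0) :
    (A₁ * n + B₁ * x + C₁ = 0 ∧ A₂ * n + B₂ * x + C₂ = 0) ↔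
      (2 * (A₂ * B₁ - A₁ * B₂) * x + (2 * A₂ * C₁ - 2 * A₁ * C₂) = 0 ∧
        (A₂ * B₁ - A₁ * B₂) * n = B₂ * C₁ - B₁ * C₂) := by
  constructor
  · rintro ⟨h₁, h₂⟩
    exact ⟨by linear_combination 2 * A₂ * h₁ - 2 * A₁ * h₂,
      by linear_combination B₁ * h₂ - B₂ * h₁⟩
  · rintro ⟨hlin, hnorm⟩
    have h2a : 2 * (A₂ * B₁ - A₁ * B₂) ≠ 0 := mul_ne_zero two_ne_zero ha
    refine ⟨mul_left_cancel₀ h2a ?_, mul_left_cancel₀ h2a ?_⟩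
    · linear_combination 2 * A₁ * hnorm + B₁ * hlin
    · linear_combination 2 * A₂ * hnorm + B₂ * hlin

theorem intersection_point_is_root_of_q₃_general
    (q₁ q₂ q₃ : BQF)
    (hq₃ : q₃ = (q₂.1 * q₁.2.1 - q₁.1 * q₂.2.1,
                 2 * q₂.1 * q₁.2.2 - 2 * q₁.1 * q₂.2.2,
                 q₂.2.1 * q₁.2.2 - q₁.2.1 * q₂.2.2)) :
    disc q₃ = (BΔ q₁ q₂) ^ 2 - disc q₁ * disc q₂ ∧
    ((BΔ q₁ q₂) ^ 2 < disc q₁ * disc q₂ →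
      ∃ z : ℂ, 0 < z.im ∧
        (∀ w : ℂ, (0 < w.im ∧
            (q₃.1 : ℂ) * w ^ 2 + (q₃.2.1 : ℂ) * w + (q₃.2.2 : ℂ) = 0) ↔ w = z) ∧
        (∀ w : ℂ, (w ∈ rootGeodesic q₁ ∧ w ∈ rootGeodesic q₂) ↔ w = z)) := by
  change q₃ = crossForm q₁ q₂ at hq₃
  have hdisc₃ : disc q₃ = BΔ q₁ q₂ ^ 2 - disc q₁ * disc q₂ :=
    hq₃ ▸ disc_crossForm q₁ q₂
  refine ⟨hdisc₃, fun hlt => ?_⟩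
  have hneg : discrim (q₃.1 : ℝ) q₃.2.1 q₃.2.2 < 0 := by
    rw [discrim]
    exact_mod_cast (show disc q₃ < 0 by rw [hdisc₃]; linarith)
  obtain ⟨z, hz, hunique⟩ := existsUnique_im_pos_of_discrim_neg hneg
  have ha := ne_zero_of_discrim_neg hneg
  refine ⟨z, hz, fun w => ?_, fun w => ?_⟩
  · rw [← hunique w, ← ofReal_intCast, ← ofReal_intCast, ← ofReal_intCast]
    exact and_congr_right fun hw => quadratic_eq_zero_iff_of_im_ne_zero hw.ne'
  · rw [← hunique w]
    subst hq₃
    simp only [rootGeodesic, Set.mem_ofPred_eq, crossForm] at ha ⊢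
    push_cast at ha ⊢
    rw [← and_and_left]
    exact and_congr_right fun _ => pencil_eq_zero_iff ha

/-- Proposition 5(ii)(b) of the paper.
The form `q₃ = [A₂B₁ - A₁B₂, 2A₂C₁ - 2A₁C₂, B₂C₁ - B₁C₂]` has discriminant
`x² - D₁D₂` where `x = B_Δ(q₁,q₂)`; if `x² < D₁D₂`, its unique upper half plane
root is the unique intersection point of the root geodesics of `q₁, q₂`. -/
theorem intersection_point_is_root_of_q₃
    (q₁ q₂ q₃ : BQF) (h₁ : IsPIBQF q₁) (h₂ : IsPIBQF q₂)
    (hq₃ : q₃ = (q₂.1 * q₁.2.1 - q₁.1 * q₂.2.1,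
                 2 * q₂.1 * q₁.2.2 - 2 * q₁.1 * q₂.2.2,
                 q₂.2.1 * q₁.2.2 - q₁.2.1 * q₂.2.2)) :
    disc q₃ = (BΔ q₁ q₂) ^ 2 - disc q₁ * disc q₂ ∧
    ((BΔ q₁ q₂) ^ 2 < disc q₁ * disc q₂ →
      ∃ z : ℂ, 0 < z.im ∧
        (∀ w : ℂ, (0 < w.im ∧
            (q₃.1 : ℂ) * w ^ 2 + (q₃.2.1 : ℂ) * w + (q₃.2.2 : ℂ) = 0) ↔ w = z) ∧
        (∀ w : ℂ, (w ∈ rootGeodesic q₁ ∧ w ∈ rootGeodesic q₂) ↔ w = z)) :=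
  intersection_point_is_root_of_q₃_general q₁ q₂ q₃ hq₃
end

section
/- Let q₁ = [A₁,B₁,C₁] and q₂ = [A₂,B₂,C₂] be PIBQFs with discriminants D₁, D₂ satisfying B_Δ(q₁,q₂)² < D₁D₂, and set Wᵢ := [[−Bᵢ, −2Cᵢ],[2Aᵢ, Bᵢ]] for i = 1,2. Then det(W₁W₂) = D₁D₂ > 0, and the unique point z of the upper half-plane lying on both root geodesics ℓ_{q₁} and ℓ_{q₂} is fixed by the Möbius action of W₁W₂: writing W₁W₂ = [[a,b],[c,d]], one has cz + d ≠ 0 and (az + b)/(cz + d) = z. -/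
/-- The matrix `[[-B, -2C],[2A, B]]` attached to a form `q = [A,B,C]`. -/
def Wmat (q : BQF) : Matrix (Fin 2) (Fin 2) ℤ :=
  !![-q.2.1, -2 * q.2.2; 2 * q.1, q.2.1]


/-!
For `q = [A,B,C]` the geodesic equation `A z z̄ + B (z + z̄)/2 + C = 0` says exactly that
`W_q` sends `z̄` to `z`, and, `W_q` being real, `z` to `z̄`: the Möbius action of `W_q` is the
reflection in `ℓ_q` followed by complex conjugation. At the intersection point, `W₁W₂`
therefore maps `z ↦ z̄ ↦ z`. In homogeneous coordinates the scalars picked up on the way are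
`2Aᵢz + Bᵢ`, which vanish only if `Aᵢ = Bᵢ = 0` since `Im z ≠ 0`, impossible as `Dᵢ ≠ 0`.
-/

open Complex ComplexConjugate Matrix

lemma det_Wmat (q : BQF) : (Wmat q).det = -disc q := by
  simp only [Wmat, det_fin_two_of, disc]
  ring

lemma Wmat_mulVec_eq_smul_conj {q : BQF} {z : ℂ}
    (hz : (q.1 : ℝ) * normSq z + (q.2.1 : ℝ) * z.re + (q.2.2 : ℝ) = 0) :
    (Wmat q).map (Int.castRingHom ℂ) *ᵥ ![z, 1] =
      (2 * q.1 * z + q.2.1 : ℂ) • ![conj z, 1] := by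
  have hzC : 2 * (q.1 : ℂ) * (z * conj z) + (q.2.1 : ℂ) * (z + conj z)
      + 2 * (q.2.2 : ℂ) = 0 := by
    rw [mul_conj, add_conj, ofReal_mul, ofReal_ofNat]
    have hzR := congrArg (fun t : ℝ => (t : ℂ)) hz
    push_cast at hzR
    linear_combination 2 * hzR
  ext i
  fin_cases i
  · simp only [mulVec, dotProduct, Wmat, Int.reduceNeg, neg_mul, Int.coe_castRingHom,
      Fin.zero_eta, Fin.isValue, map_apply, of_apply, cons_val', cons_val_fin_one, cons_val_zero,
      Fin.sum_univ_two, Int.cast_neg, cons_val_one, Int.cast_mul, Int.cast_ofNat, mul_one,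
      Pi.smul_apply, smul_eq_mul]
    linear_combination -hzC
  · simp [Wmat, mulVec, dotProduct, Fin.sum_univ_two]

lemma two_mul_mul_add_ne_zero_of_disc_ne_zero {q : BQF} {z : ℂ} (hq : disc q ≠ 0)
    (hz : z.im ≠ 0) :
    (2 * q.1 * z + q.2.1 : ℂ) ≠ 0 := by
  intro h0
  have hA : q.1 = 0 := by
    have him : (q.1 : ℝ) * z.im = 0 := by simpa using congrArg Complex.im h0
    exact_mod_cast (mul_eq_zero.mp him).resolve_right hz
  have hB : q.2.1 = 0 := by simpa [hA] using h0
  exact hq (by simp [disc, hA, hB])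

lemma mobius_eq_self_of_mulVec_eq_smul {K : Type*} [Field K] {M : Matrix (Fin 2) (Fin 2) K}
    {z μ : K} (hμ : μ ≠ 0) (h : M *ᵥ ![z, 1] = μ • ![z, 1]) :
    M 1 0 * z + M 1 1 ≠ 0 ∧ (M 0 0 * z + M 0 1) / (M 1 0 * z + M 1 1) = z := by
  have h0 : M 0 0 * z + M 0 1 = μ * z := by simpa [mulVec, dotProduct] using congrFun h 0
  have h1 : M 1 0 * z + M 1 1 = μ := by simpa [mulVec, dotProduct] using congrFun h 1
  rw [h0, h1]
  exact ⟨hμ, mul_div_cancel_left₀ z hμ⟩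

theorem intersection_point_fixed_by_W₁W₂_general
    (q₁ q₂ : BQF) (h₁ : IsPIBQF q₁) (h₂ : IsPIBQF q₂) :
    (Wmat q₁ * Wmat q₂).det = disc q₁ * disc q₂ ∧
    0 < disc q₁ * disc q₂ ∧
    ∀ z : ℂ, z ∈ rootGeodesic q₁ → z ∈ rootGeodesic q₂ →
      (((Wmat q₁ * Wmat q₂) 1 0 : ℂ) * z + ((Wmat q₁ * Wmat q₂) 1 1 : ℂ) ≠ 0 ∧
        (((Wmat q₁ * Wmat q₂) 0 0 : ℂ) * z + ((Wmat q₁ * Wmat q₂) 0 1 : ℂ)) /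
          (((Wmat q₁ * Wmat q₂) 1 0 : ℂ) * z + ((Wmat q₁ * Wmat q₂) 1 1 : ℂ)) = z) := by
  refine ⟨by rw [det_mul, det_Wmat, det_Wmat]; ring, mul_pos h₁.2.1 h₂.2.1, ?_⟩
  rintro z ⟨hy, hz₁⟩ ⟨-, hz₂⟩
  have hconj₁ := Wmat_mulVec_eq_smul_conj (z := conj z) (by simpa using hz₁)
  rw [conj_conj] at hconj₁
  have hprod : (Wmat q₁ * Wmat q₂).map (Int.castRingHom ℂ) *ᵥ ![z, 1] =
      ((2 * q₂.1 * z + q₂.2.1) * (2 * q₁.1 * conj z + q₁.2.1) : ℂ) • ![z, 1] := by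
    rw [Matrix.map_mul, ← mulVec_mulVec, Wmat_mulVec_eq_smul_conj hz₂, mulVec_smul, hconj₁,
      smul_smul]
  refine mobius_eq_self_of_mulVec_eq_smul (mul_ne_zero ?_ ?_) hprod
  · exact two_mul_mul_add_ne_zero_of_disc_ne_zero h₂.2.1.ne' hy.ne'
  · exact two_mul_mul_add_ne_zero_of_disc_ne_zero h₁.2.1.ne' (by simpa using hy.ne')

/-- Proposition 6(iii)(b) of the paper, specialized.
With `Wᵢ = [[-Bᵢ,-2Cᵢ],[2Aᵢ,Bᵢ]]`, `det(W₁W₂) = D₁D₂ > 0`, and the unique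
intersection point of the root geodesics is fixed by the Möbius action of
`W₁W₂`. -/
theorem intersection_point_fixed_by_W₁W₂
    (q₁ q₂ : BQF) (h₁ : IsPIBQF q₁) (h₂ : IsPIBQF q₂)
    (h : (BΔ q₁ q₂) ^ 2 < disc q₁ * disc q₂) :
    (Wmat q₁ * Wmat q₂).det = disc q₁ * disc q₂ ∧
    0 < disc q₁ * disc q₂ ∧
    ∀ z : ℂ, z ∈ rootGeodesic q₁ → z ∈ rootGeodesic q₂ →
      (((Wmat q₁ * Wmat q₂) 1 0 : ℂ) * z + ((Wmat q₁ * Wmat q₂) 1 1 : ℂ) ≠ 0 ∧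
        (((Wmat q₁ * Wmat q₂) 0 0 : ℂ) * z + ((Wmat q₁ * Wmat q₂) 0 1 : ℂ)) /
          (((Wmat q₁ * Wmat q₂) 1 0 : ℂ) * z + ((Wmat q₁ * Wmat q₂) 1 1 : ℂ)) = z) :=
  intersection_point_fixed_by_W₁W₂_general q₁ q₂ h₁ h₂
end

section
/- Let q₁, q₂ be PIBQFs with discriminants D₁, D₂ such that q₂ is not a rational multiple of −q₁ and the four roots q_{1,f}, q_{1,s}, q_{2,f}, q_{2,s} satisfy (q_{1,f} − q_{2,s})(q_{1,s} − q_{2,f}) ≠ 0. Then B_Δ(q₁,q₂) + √(D₁D₂) ≠ 0 and the cross-ratio satisfies ((q_{1,f} − q_{2,f})(q_{1,s} − q_{2,s})) / ((q_{1,f} − q_{2,s})(q_{1,s} − q_{2,f})) = (B_Δ(q₁,q₂) − √(D₁D₂)) / (B_Δ(q₁,q₂) + √(D₁D₂)). -/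
lemma bqf_fst_ne_zero (q : BQF) (h : IsPIBQF q) : q.1 ≠ 0 := by
  intro h0
  exact h.2.2 ⟨q.2.1, by simp [disc, h0, sq]⟩

lemma cross_key (a1 b1 c1 a2 b2 c2 s1 s2 : ℝ) (ha1 : a1 ≠ 0) (ha2 : a2 ≠ 0)
    (h1 : s1 ^ 2 = b1 ^ 2 - 4 * a1 * c1) (h2 : s2 ^ 2 = b2 ^ 2 - 4 * a2 * c2) :
    ((-b1 + s1) / (2 * a1) - (-b2 - s2) / (2 * a2)) *
        ((-b1 - s1) / (2 * a1) - (-b2 + s2) / (2 * a2)) =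
      -((b1 * b2 - 2 * a1 * c2 - 2 * a2 * c1) + s1 * s2) / (2 * a1 * a2) ∧
    ((-b1 + s1) / (2 * a1) - (-b2 + s2) / (2 * a2)) *
        ((-b1 - s1) / (2 * a1) - (-b2 - s2) / (2 * a2)) =
      -((b1 * b2 - 2 * a1 * c2 - 2 * a2 * c1) - s1 * s2) / (2 * a1 * a2) := by
  constructor <;> (field_simp; linear_combination (-a2^2)*h1 + (-a1^2)*h2)

/-- Remark after Proposition 5 of the paper.
The cross-ratio of the roots of `q₁, q₂` equals
`(B_Δ - √(D₁D₂)) / (B_Δ + √(D₁D₂))`. -/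
theorem crossRatio_eq
    (q₁ q₂ : BQF) (h₁ : IsPIBQF q₁) (h₂ : IsPIBQF q₂)
    (hmul : ¬ ∃ r : ℚ, (q₂.1 : ℚ) = r * (-(q₁.1 : ℚ)) ∧
        (q₂.2.1 : ℚ) = r * (-(q₁.2.1 : ℚ)) ∧ (q₂.2.2 : ℚ) = r * (-(q₁.2.2 : ℚ)))
    (hden : (firstRoot q₁ - secondRoot q₂) * (secondRoot q₁ - firstRoot q₂) ≠ 0) :
    (BΔ q₁ q₂ : ℝ) + Real.sqrt ((disc q₁ : ℝ) * (disc q₂ : ℝ)) ≠ 0 ∧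
    ((firstRoot q₁ - firstRoot q₂) * (secondRoot q₁ - secondRoot q₂)) /
        ((firstRoot q₁ - secondRoot q₂) * (secondRoot q₁ - firstRoot q₂)) =
      ((BΔ q₁ q₂ : ℝ) - Real.sqrt ((disc q₁ : ℝ) * (disc q₂ : ℝ))) /
        ((BΔ q₁ q₂ : ℝ) + Real.sqrt ((disc q₁ : ℝ) * (disc q₂ : ℝ))) := by
  have ha1 : (q₁.1 : ℝ) ≠ 0 := Int.cast_ne_zero.2 (bqf_fst_ne_zero _ h₁)
  have ha2 : (q₂.1 : ℝ) ≠ 0 := Int.cast_ne_zero.2 (bqf_fst_ne_zero _ h₂)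
  have hd1 : (0:ℝ) ≤ (disc q₁ : ℝ) := by exact_mod_cast h₁.2.1.le
  have hd2 : (0:ℝ) ≤ (disc q₂ : ℝ) := by exact_mod_cast h₂.2.1.le
  set s₁ := Real.sqrt (disc q₁) with hs₁def
  set s₂ := Real.sqrt (disc q₂) with hs₂def
  have hs1 : s₁ ^ 2 = ((q₁.2.1:ℝ)) ^ 2 - 4 * q₁.1 * q₁.2.2 := by
    rw [hs₁def, Real.sq_sqrt hd1, disc]; push_cast; ring
  have hs2 : s₂ ^ 2 = ((q₂.2.1:ℝ)) ^ 2 - 4 * q₂.1 * q₂.2.2 := by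
    rw [hs₂def, Real.sq_sqrt hd2, disc]; push_cast; ring
  have hS : Real.sqrt ((disc q₁ : ℝ) * (disc q₂ : ℝ)) = s₁ * s₂ := Real.sqrt_mul hd1 _
  obtain ⟨key2, key1⟩ := cross_key (q₁.1:ℝ) q₁.2.1 q₁.2.2 q₂.1 q₂.2.1 q₂.2.2 s₁ s₂
    ha1 ha2 hs1 hs2
  have hBD : (BΔ q₁ q₂ : ℝ) =
      (q₁.2.1:ℝ) * q₂.2.1 - 2 * q₁.1 * q₂.2.2 - 2 * q₂.1 * q₁.2.2 := by
    rw [BΔ]; push_cast; ring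
  have e2 : (firstRoot q₁ - secondRoot q₂) * (secondRoot q₁ - firstRoot q₂) =
      -((BΔ q₁ q₂ : ℝ) + s₁ * s₂) / (2 * q₁.1 * q₂.1) := by
    rw [firstRoot, secondRoot, firstRoot, secondRoot, ← hs₁def, ← hs₂def, hBD]; exact key2
  have e1 : (firstRoot q₁ - firstRoot q₂) * (secondRoot q₁ - secondRoot q₂) =
      -((BΔ q₁ q₂ : ℝ) - s₁ * s₂) / (2 * q₁.1 * q₂.1) := by
    rw [firstRoot, secondRoot, firstRoot, secondRoot, ← hs₁def, ← hs₂def, hBD]; exact key1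
  have hne : (BΔ q₁ q₂ : ℝ) + s₁ * s₂ ≠ 0 := by
    intro h0
    apply hden
    rw [e2, h0]
    simp
  rw [hS]
  refine ⟨hne, ?_⟩
  rw [e1, e2]
  rw [div_div_div_cancel_right₀, neg_div, div_neg, neg_neg]
  exact mul_ne_zero (mul_ne_zero two_ne_zero ha1) ha2
end

section
/- Let M be a 2×2 real matrix with Tr(M) = 0 and det(M) > 0. Then the (2,1) entry of M is nonzero, and for every N ∈ SL(2,ℝ), the (2,1) entry of NMN⁻¹ is nonzero and has the same sign as the (2,1) entry of M. -/
/-- from the proof of Proposition 6 of the paper.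
If `M` is a 2×2 real matrix with trace `0` and positive determinant, then its
lower-left entry is nonzero, and conjugating by any `N ∈ SL(2,ℝ)` preserves the
sign of the lower-left entry. -/
theorem lowerLeft_sign_invariant_under_conjugation
    (M : Matrix (Fin 2) (Fin 2) ℝ)
    (htr : Matrix.trace M = 0) (hdet : 0 < M.det) :
    M 1 0 ≠ 0 ∧
    ∀ N : Matrix.SpecialLinearGroup (Fin 2) ℝ,
      ((N : Matrix (Fin 2) (Fin 2) ℝ) * M * ((N⁻¹ : Matrix.SpecialLinearGroup (Fin 2) ℝ) :
          Matrix (Fin 2) (Fin 2) ℝ)) 1 0 ≠ 0 ∧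
      0 < ((N : Matrix (Fin 2) (Fin 2) ℝ) * M * ((N⁻¹ : Matrix.SpecialLinearGroup (Fin 2) ℝ) :
          Matrix (Fin 2) (Fin 2) ℝ)) 1 0 * (M 1 0) := by
  rw [Matrix.trace_fin_two] at htr
  rw [Matrix.det_fin_two] at hdet
  have hc : M 1 0 ≠ 0 := by
    intro h
    rw [h] at hdet
    have h11 : M 1 1 = -M 0 0 := by linarith
    rw [h11] at hdet
    nlinarith [sq_nonneg (M 0 0)]
  refine ⟨hc, fun N => ?_⟩
  have hN : (N : Matrix (Fin 2) (Fin 2) ℝ).det = 1 := N.2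
  rw [Matrix.det_fin_two] at hN
  rw [Matrix.SpecialLinearGroup.SL2_inv_expl N]
  have key : 0 < ((N : Matrix (Fin 2) (Fin 2) ℝ) * M *
      ((⟨![![N.1 1 1, -N.1 0 1], ![-N.1 1 0, N.1 0 0]], Matrix.SpecialLinearGroup.SL2_inv_expl_det N⟩ :
        Matrix.SpecialLinearGroup (Fin 2) ℝ) : Matrix (Fin 2) (Fin 2) ℝ)) 1 0 * (M 1 0) := by
    simp only [Matrix.mul_apply, Fin.sum_univ_two, Matrix.cons_val_zero, Matrix.cons_val_one,
      Matrix.head_cons, Matrix.head_fin_const, Matrix.SpecialLinearGroup.coe_mk]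
    have h11 : M 1 1 = -M 0 0 := by linarith
    change 0 < ((N : Matrix (Fin 2) (Fin 2) ℝ) * M * Matrix.of ![![N.1 1 1, -N.1 0 1], ![-N.1 1 0, N.1 0 0]]) 1 0 * M 1 0
    simp only [Matrix.mul_apply, Fin.sum_univ_two, Matrix.cons_val_zero, Matrix.cons_val_one,
      Matrix.head_cons, Matrix.of_apply, h11]
    rw [h11] at hdet
    rcases eq_or_ne (N.1 1 0) 0 with hr | hr
    · have hs : N.1 1 1 ≠ 0 := by
        intro h; rw [hr, h] at hN; simp at hN
      have h1 : 0 < (M 1 0 * N.1 1 1) ^ 2 := by positivity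
      rw [hr]
      nlinarith [h1]
    · have h2 : 0 < (M 0 0 * -M 0 0 - M 0 1 * M 1 0) * (N.1 1 0) ^ 2 :=
        mul_pos hdet (by positivity)
      nlinarith [sq_nonneg (M 1 0 * N.1 1 1 + M 0 0 * N.1 1 0), h2]
  exact ⟨fun h => by simp [h] at key, key⟩
end

section
/- Let q = [A,B,C] be a PIBQF of discriminant D. Then the invariant automorph γ_q lies in SL(2,ℤ), satisfies γ_q∘q = q, and the stabilizer of q under the SL(2,ℤ)-action is exactly {±γ_qᵏ : k ∈ ℤ}; that is, for γ ∈ SL(2,ℤ), γ∘q = q if and only if γ = ±γ_qᵏ for some integer k. -/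
private def bmat (A B C s u : ℤ) : Matrix (Fin 2) (Fin 2) ℤ := !![s, -C*u; A*u, s + B*u]

private lemma bmat_det (A B C s u : ℤ) (h : s*(s+B*u) + A*C*u^2 = 1) :
    (bmat A B C s u).det = 1 := by
  simp only [bmat, Matrix.det_fin_two_of]
  linear_combination h

private lemma bmat_mul (A B C s₁ u₁ s₂ u₂ : ℤ) :
    bmat A B C s₁ u₁ * bmat A B C s₂ u₂
      = bmat A B C (s₁*s₂ - A*C*u₁*u₂) (s₁*u₂ + s₂*u₁ + B*u₁*u₂) := by
  ext i j
  fin_cases i <;> fin_cases j <;>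
    simp [bmat, Matrix.mul_apply, Fin.sum_univ_two] <;> ring

private lemma actForm_mul' (γ δ : SL2Z) (q : BQF) :
    actForm (γ * δ) q = actForm δ (actForm γ q) := by
  obtain ⟨a, b, c⟩ := q
  simp only [actForm, Matrix.SpecialLinearGroup.coe_mul, Matrix.mul_apply, Fin.sum_univ_two,
    Prod.mk.injEq]
  refine ⟨by ring, by ring, by ring⟩

private lemma actForm_one' (q : BQF) : actForm 1 q = q := by
  obtain ⟨a, b, c⟩ := q
  simp [actForm]

private lemma actForm_congr (γ δ : SL2Z) (q : BQF)
    (h : (γ : Matrix (Fin 2) (Fin 2) ℤ) = (δ : Matrix (Fin 2) (Fin 2) ℤ) ∨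
      (γ : Matrix (Fin 2) (Fin 2) ℤ) = -(δ : Matrix (Fin 2) (Fin 2) ℤ)) :
    actForm γ q = actForm δ q := by
  obtain ⟨a, b, c⟩ := q
  rcases h with h | h <;>
    simp only [actForm, h, Matrix.neg_apply, Prod.mk.injEq] <;>
    exact ⟨by ring, by ring, by ring⟩

private lemma actForm_bmat (A B C s u : ℤ) (γ : SL2Z)
    (hγ : (γ : Matrix (Fin 2) (Fin 2) ℤ) = bmat A B C s u)
    (h : s*(s+B*u) + A*C*u^2 = 1) :
    actForm γ (A, B, C) = (A, B, C) := by
  have e00 : (γ : Matrix (Fin 2) (Fin 2) ℤ) 0 0 = s := by rw [hγ]; simp [bmat]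
  have e01 : (γ : Matrix (Fin 2) (Fin 2) ℤ) 0 1 = -(C*u) := by rw [hγ]; simp [bmat]
  have e10 : (γ : Matrix (Fin 2) (Fin 2) ℤ) 1 0 = A*u := by rw [hγ]; simp [bmat]
  have e11 : (γ : Matrix (Fin 2) (Fin 2) ℤ) 1 1 = s+B*u := by rw [hγ]; simp [bmat]
  simp only [actForm, e00, e01, e10, e11, Prod.mk.injEq]
  exact ⟨by linear_combination A*h, by linear_combination B*h, by linear_combination C*h⟩

set_option maxHeartbeats 1600000 in
/-- Definition 9 of the paper and its properties.
If `(T,U)` is the least positive solution of `t² - Du² = 4` for `D = disc q`,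
then the invariant automorph `γ_q = [[(T-BU)/2, -CU],[AU, (T+BU)/2]]` lies in
`SL(2,ℤ)`, fixes `q`, and generates the stabilizer of `q` up to sign. -/
theorem invariant_automorph_generates_stabilizer
    (q : BQF) (hq : IsPIBQF q) (T U : ℤ) (hT : 0 < T) (hU : 0 < U)
    (hPell : T ^ 2 - disc q * U ^ 2 = 4)
    (hmin : ∀ t u : ℤ, 0 < t → 0 < u → t ^ 2 - disc q * u ^ 2 = 4 → T ≤ t ∧ U ≤ u) :
    ∃ γq : SL2Z,
      (γq : Matrix (Fin 2) (Fin 2) ℤ) =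
        !![(T - q.2.1 * U) / 2, -q.2.2 * U; q.1 * U, (T + q.2.1 * U) / 2] ∧
      actForm γq q = q ∧
      ∀ γ : SL2Z, actForm γ q = q ↔
        ∃ k : ℤ, (γ : Matrix (Fin 2) (Fin 2) ℤ) = ((γq ^ k : SL2Z) : Matrix (Fin 2) (Fin 2) ℤ) ∨
          (γ : Matrix (Fin 2) (Fin 2) ℤ) = -((γq ^ k : SL2Z) : Matrix (Fin 2) (Fin 2) ℤ) := by
  obtain ⟨A, B, C⟩ := q
  obtain ⟨hprim, hDpos, hDnsq⟩ := hq
  have hdisc : disc (A, B, C) = B^2 - 4*A*C := rfl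
  rw [hdisc] at hPell hDpos hDnsq
  simp only [hdisc] at hmin
  have hg1 : Int.gcd A (Int.gcd B C) = 1 := hprim
  have hA : A ≠ 0 := by rintro rfl; exact hDnsq ⟨B, by ring⟩
  have hC : C ≠ 0 := by rintro rfl; exact hDnsq ⟨B, by ring⟩
  have hD5 : 5 ≤ B^2 - 4*A*C := by
    by_contra h
    have hmod : (B^2 - 4*A*C) % 4 = 0 ∨ (B^2-4*A*C) % 4 = 1 := by
      rcases Int.even_or_odd B with ⟨k, hk⟩ | ⟨k, hk⟩
      · left
        obtain ⟨m, hm⟩ : ∃ m, B^2 - 4*A*C = 4*m := ⟨k^2 - A*C, by rw [hk]; ring⟩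
        omega
      · right
        obtain ⟨m, hm⟩ : ∃ m, B^2 - 4*A*C = 4*m + 1 := ⟨k^2 + k - A*C, by rw [hk]; ring⟩
        omega
    have h14 : B^2-4*A*C = 1 ∨ B^2-4*A*C = 4 := by omega
    rcases h14 with h1 | h1
    · exact hDnsq ⟨1, by omega⟩
    · exact hDnsq ⟨2, by omega⟩
  -- parity of T - B*U
  obtain ⟨S, hS⟩ : ∃ S, T - B*U = 2*S := by
    rcases Int.even_or_odd (T - B*U) with ⟨k, hk⟩ | ⟨k, hk⟩
    · exact ⟨k, by omega⟩
    · exfalso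
      obtain ⟨m, hm⟩ : ∃ m, (T-B*U)*(T+B*U) = 4*m := ⟨1 - A*C*U^2, by linear_combination hPell⟩
      obtain ⟨j, hj⟩ : ∃ j, (T-B*U)*(T+B*U) = 2*j+1 := by
        refine ⟨2*k^2 + 2*k*B*U + 2*k + B*U, ?_⟩
        have hT' : T = 2*k + 1 + B*U := by omega
        rw [hT']; ring
      omega
  have hT2s : T = 2*S + B*U := by omega
  have hSolSU : S*(S+B*U) + A*C*U^2 = 1 := by
    have h4 : 4*(S*(S+B*U) + A*C*U^2) = 4 := by
      linear_combination hPell - (T + B*U + 2*S) * hS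
    linarith only [h4]
  have hU2 : 1 ≤ U^2 := by
    have h := mul_le_mul (show (1:ℤ) ≤ U by omega) (show (1:ℤ) ≤ U by omega)
      (by norm_num) (by omega)
    nlinarith only [h]
  have hT3 : 3 ≤ T := by
    have hDU : 0 ≤ (B^2-4*A*C-5)*U^2 := mul_nonneg (by omega) (sq_nonneg U)
    have h9 : 9 ≤ T^2 := by nlinarith only [hPell, hDU, hU2, hD5]
    by_contra h
    push_neg at h
    have h1 : T*T ≤ 2*T := mul_le_mul_of_nonneg_right (by omega) (by omega)
    nlinarith only [h9, h1, hT, h]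
  set γq : SL2Z := ⟨bmat A B C S U, bmat_det A B C S U hSolSU⟩ with hγq
  have hγqco : (γq : Matrix (Fin 2) (Fin 2) ℤ) = bmat A B C S U := rfl
  have hPellT : (2*S+B*U)^2 - (B^2-4*A*C)*U^2 = 4 := by linear_combination 4*hSolSU
  have hT'pos : 0 < 2*S+B*U := by omega
  have hT'3 : 3 ≤ 2*S+B*U := by omega
  -- the descent
  have pos_descent : ∀ n : ℕ, ∀ s u : ℤ, u.natAbs ≤ n → 0 < u → 0 < 2*s + B*u →
      s*(s+B*u) + A*C*u^2 = 1 →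
      ∃ k : ℕ, bmat A B C s u = ((γq^k : SL2Z) : Matrix (Fin 2) (Fin 2) ℤ) := by
    intro n
    induction n with
    | zero => intro s u h hu _ _; omega
    | succ n ih =>
      intro s u hun hu ht hsol
      have ht2 : (2*s+B*u)^2 - (B^2-4*A*C)*u^2 = 4 := by linear_combination 4*hsol
      obtain ⟨hTm, hUm⟩ := hmin _ _ ht hu ht2
      have hsol' : (s*(S+B*U)+A*C*u*U)*((s*(S+B*U)+A*C*u*U)+B*(u*S-s*U))
          + A*C*(u*S-s*U)^2 = 1 := by
        linear_combination (s*(s+B*u)+A*C*u^2) * hSolSU + hsol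
      -- u' ≥ 0
      have hq1 : (u*(2*S+B*U) - (2*s+B*u)*U) * (u*(2*S+B*U) + (2*s+B*u)*U)
          = 4*(u^2 - U^2) := by linear_combination u^2*hPellT - U^2*ht2
      have hq2 : 0 < u*(2*S+B*U) + (2*s+B*u)*U := by
        have h1 := mul_pos hu hT'pos; have h2 := mul_pos ht hU
        linarith only [h1, h2]
      have hq3 : 0 ≤ u^2 - U^2 := by
        have h := pow_le_pow_left₀ hU.le hUm 2
        linarith only [h]
      have hx : u*(2*S+B*U) - (2*s+B*u)*U = 2*(u*S - s*U) := by ring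
      have key1 : 0 ≤ u*S - s*U := by
        rcases le_or_gt 0 (u*S - s*U) with h | h
        · exact h
        · exfalso
          have h1 : (u*(2*S+B*U) - (2*s+B*u)*U) * (u*(2*S+B*U) + (2*s+B*u)*U) < 0 :=
            mul_neg_of_neg_of_pos (by linarith only [hx, h]) hq2
          rw [hq1] at h1
          linarith only [h1, hq3]
      -- t' > 0
      have hq8 : ((2*s+B*u)*(2*S+B*U) - (B^2-4*A*C)*u*U) *
          ((2*s+B*u)*(2*S+B*U) + (B^2-4*A*C)*u*U)
          = 4*(B^2-4*A*C)*u^2 + 4*(B^2-4*A*C)*U^2 + 16 := by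
        linear_combination (2*S+B*U)^2 * ht2 + ((B^2-4*A*C)*u^2+4) * hPellT
      have hq9 : 0 < (2*s+B*u)*(2*S+B*U) + (B^2-4*A*C)*u*U := by
        have h1 := mul_pos ht hT'pos
        have h2 := mul_pos (mul_pos (show (0:ℤ) < B^2-4*A*C by omega) hu) hU
        linarith only [h1, h2]
      have hx3 : (2*s+B*u)*(2*S+B*U) - (B^2-4*A*C)*u*U
          = 2*(2*(s*(S+B*U)+A*C*u*U) + B*(u*S-s*U)) := by ring
      have key3 : 0 < 2*(s*(S+B*U)+A*C*u*U) + B*(u*S-s*U) := by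
        rcases lt_or_ge 0 (2*(s*(S+B*U)+A*C*u*U) + B*(u*S-s*U)) with h | h
        · exact h
        · exfalso
          have hfst : (2*s+B*u)*(2*S+B*U) - (B^2-4*A*C)*u*U ≤ 0 := by
            linarith only [hx3, h]
          have h1 : ((2*s+B*u)*(2*S+B*U) - (B^2-4*A*C)*u*U) *
              ((2*s+B*u)*(2*S+B*U) + (B^2-4*A*C)*u*U) ≤ 0 :=
            mul_nonpos_iff.mpr (Or.inr ⟨hfst, hq9.le⟩)
          rw [hq8] at h1
          have hDu : 0 < (B^2-4*A*C)*u^2 := mul_pos (by omega) (pow_pos hu 2)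
          have hDU : 0 < (B^2-4*A*C)*U^2 := mul_pos (by omega) (pow_pos hU 2)
          linarith only [h1, hDu, hDU]
      -- multiplication identity
      have hmulmat : bmat A B C (s*(S+B*U)+A*C*u*U) (u*S-s*U) * bmat A B C S U
          = bmat A B C s u := by
        rw [bmat_mul]
        have e1 : (s*(S+B*U)+A*C*u*U)*S - A*C*(u*S-s*U)*U = s := by
          linear_combination s*hSolSU
        have e2 : (s*(S+B*U)+A*C*u*U)*U + S*(u*S-s*U) + B*(u*S-s*U)*U = u := by
          linear_combination u*hSolSU
        rw [e1, e2]
      rcases eq_or_lt_of_le key1 with h0 | hpos'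
      · -- u' = 0
        refine ⟨1, ?_⟩
        have hs'2 : (s*(S+B*U)+A*C*u*U) * (s*(S+B*U)+A*C*u*U) = 1 := by
          linear_combination hsol' + (B*(s*(S+B*U)+A*C*u*U) + A*C*(u*S-s*U)) * h0
        have hs'pos : 0 < s*(S+B*U)+A*C*u*U := by
          have hBu : B*(u*S-s*U) = 0 := by rw [← h0]; ring
          linarith only [key3, hBu]
        have hs'1 : s*(S+B*U)+A*C*u*U = 1 := by
          rcases mul_self_eq_one_iff.mp hs'2 with h | h
          · exact h
          · exfalso; rw [h] at hs'pos; norm_num at hs'pos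
        rw [hs'1, ← h0] at hmulmat
        have hone : bmat A B C 1 0 = 1 := by
          ext i j; fin_cases i <;> fin_cases j <;> simp [bmat]
        rw [hone, one_mul] at hmulmat
        rw [pow_one, hγqco]
        exact hmulmat.symm
      · -- u' > 0 : recurse
        have key2 : u*S - s*U < u := by
          have hq4 : ((2*s+B*u)*U)^2 - (u*((2*S+B*U)-2))^2
              = 4*(U^2 + u^2*((2*S+B*U)-2)) := by
            linear_combination U^2*ht2 - u^2*hPellT
          have hq5 : 0 ≤ u*((2*S+B*U)-2) := mul_nonneg hu.le (by omega)
          have hq6 : 0 < (2*s+B*u)*U := mul_pos ht hU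
          have hq7 : u*((2*S+B*U)-2) < (2*s+B*u)*U := by
            rcases lt_or_ge (u*((2*S+B*U)-2)) ((2*s+B*u)*U) with h | h
            · exact h
            · exfalso
              have h2 : ((2*s+B*u)*U)^2 ≤ (u*((2*S+B*U)-2))^2 :=
                pow_le_pow_left₀ hq6.le h 2
              have h3 : 0 ≤ u^2*((2*S+B*U)-2) := mul_nonneg (sq_nonneg u) (by omega)
              have h4 : 0 < U^2 := pow_pos hU 2
              linarith only [hq4, h2, h3, h4]
          linarith only [hq7]
        have hun' : (u*S - s*U).natAbs ≤ n := by omega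
        obtain ⟨k, hk⟩ := ih _ _ hun' hpos' key3 hsol'
        refine ⟨k+1, ?_⟩
        rw [pow_succ, Matrix.SpecialLinearGroup.coe_mul, ← hk, hγqco]
        exact hmulmat.symm
  -- full classification of solutions
  have classify : ∀ s u : ℤ, s*(s+B*u)+A*C*u^2 = 1 →
      ∃ k : ℤ, bmat A B C s u = ((γq^k : SL2Z) : Matrix (Fin 2) (Fin 2) ℤ) ∨
        bmat A B C s u = -((γq^k : SL2Z) : Matrix (Fin 2) (Fin 2) ℤ) := by
    have main : ∀ s u : ℤ, s*(s+B*u)+A*C*u^2 = 1 → 0 < u →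
        ∃ k : ℤ, bmat A B C s u = ((γq^k : SL2Z) : Matrix (Fin 2) (Fin 2) ℤ) ∨
          bmat A B C s u = -((γq^k : SL2Z) : Matrix (Fin 2) (Fin 2) ℤ) := by
      intro s u hsol hu
      have htne : 2*s+B*u ≠ 0 := by
        intro h
        have ht2 : (2*s+B*u)^2 - (B^2-4*A*C)*u^2 = 4 := by linear_combination 4*hsol
        have h0 : (2*s+B*u)^2 = 0 := by rw [h]; ring
        have h1 : 0 < (B^2-4*A*C)*u^2 := mul_pos (by omega) (pow_pos hu 2)
        linarith only [ht2, h0, h1]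
      rcases htne.lt_or_gt with hneg | hpos
      · have hsol₂ : (-s-B*u)*((-s-B*u)+B*u) + A*C*u^2 = 1 := by linear_combination hsol
        have hpos₂ : 0 < 2*(-s-B*u)+B*u := by linarith only [hneg]
        obtain ⟨k, hk⟩ := pos_descent u.natAbs _ _ le_rfl hu hpos₂ hsol₂
        have hprod : bmat A B C (-s-B*u) u * bmat A B C s u = -1 := by
          rw [bmat_mul]
          rw [show (-s-B*u)*s - A*C*u*u = -1 by linear_combination -hsol,
              show (-s-B*u)*u + s*u + B*u*u = 0 by ring]
          ext i j; fin_cases i <;> fin_cases j <;> simp [bmat]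
        refine ⟨-(k:ℤ), Or.inr ?_⟩
        have hinv : (((γq^k)⁻¹ : SL2Z) : Matrix (Fin 2) (Fin 2) ℤ) *
            ((γq^k : SL2Z) : Matrix (Fin 2) (Fin 2) ℤ) = 1 := by
          rw [← Matrix.SpecialLinearGroup.coe_mul, inv_mul_cancel]
          rfl
        have : bmat A B C s u = -(((γq^k)⁻¹ : SL2Z) : Matrix (Fin 2) (Fin 2) ℤ) := by
          calc bmat A B C s u = 1 * bmat A B C s u := (one_mul _).symm
            _ = ((((γq^k)⁻¹ : SL2Z) : Matrix (Fin 2) (Fin 2) ℤ) *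
                  ((γq^k : SL2Z) : Matrix (Fin 2) (Fin 2) ℤ)) * bmat A B C s u := by
                rw [hinv]
            _ = (((γq^k)⁻¹ : SL2Z) : Matrix (Fin 2) (Fin 2) ℤ) *
                  (((γq^k : SL2Z) : Matrix (Fin 2) (Fin 2) ℤ) * bmat A B C s u) := by
                rw [mul_assoc]
            _ = -(((γq^k)⁻¹ : SL2Z) : Matrix (Fin 2) (Fin 2) ℤ) := by
                rw [← hk, hprod]; simp
        rw [this, zpow_neg, zpow_natCast]
      · obtain ⟨k, hk⟩ := pos_descent u.natAbs _ _ le_rfl hu hpos hsol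
        exact ⟨(k:ℤ), Or.inl (by rw [zpow_natCast]; exact hk)⟩
    intro s u hsol
    rcases lt_trichotomy u 0 with hu | hu | hu
    · have hsolN : (-s)*((-s)+B*(-u)) + A*C*(-u)^2 = 1 := by linear_combination hsol
      have hneg : bmat A B C (-s) (-u) = - bmat A B C s u := by
        ext i j; fin_cases i <;> fin_cases j <;> simp [bmat] <;> ring
      obtain ⟨k, hk | hk⟩ := main (-s) (-u) hsolN (by omega)
      · rw [hneg] at hk
        exact ⟨k, Or.inr (by rw [← hk]; simp)⟩
      · rw [hneg] at hk
        exact ⟨k, Or.inl (neg_inj.mp hk)⟩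
    · subst hu
      have hs2 : s*s = 1 := by linear_combination hsol
      rcases mul_self_eq_one_iff.mp hs2 with rfl | rfl
      · refine ⟨0, Or.inl ?_⟩
        rw [zpow_zero]
        ext i j; fin_cases i <;> fin_cases j <;> simp [bmat]
      · refine ⟨0, Or.inr ?_⟩
        rw [zpow_zero]
        ext i j; fin_cases i <;> fin_cases j <;> simp [bmat]
    · exact main s u hsol hu
  -- fixing lemmas
  have fix1 : actForm γq (A, B, C) = (A, B, C) :=
    actForm_bmat A B C S U γq hγqco hSolSU
  have fixpow : ∀ n : ℕ, actForm (γq^n) (A, B, C) = (A, B, C) := by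
    intro n; induction n with
    | zero => rw [pow_zero]; exact actForm_one' _
    | succ n ih => rw [pow_succ, actForm_mul', ih, fix1]
  have fixzpow : ∀ k : ℤ, actForm (γq^k) (A, B, C) = (A, B, C) := by
    intro k
    rcases Int.eq_nat_or_neg k with ⟨n, rfl | rfl⟩
    · rw [zpow_natCast]; exact fixpow n
    · rw [zpow_neg, zpow_natCast]
      have h := actForm_mul' (γq^n) (γq^n)⁻¹ (A, B, C)
      rw [mul_inv_cancel, fixpow n, actForm_one'] at h
      exact h.symm
  refine ⟨γq, ?_, fix1, ?_⟩
  · show (γq : Matrix (Fin 2) (Fin 2) ℤ) = !![(T - B*U)/2, -C*U; A*U, (T+B*U)/2]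
    rw [hγqco]
    ext i j; fin_cases i <;> fin_cases j <;> simp [bmat] <;> omega
  · intro γ
    constructor
    · intro hγ
      have hdet := γ.2
      rw [Matrix.det_fin_two] at hdet
      simp only [actForm, Prod.mk.injEq] at hγ
      obtain ⟨E1, E2, E3⟩ := hγ
      set a := γ.1 0 0 with ha
      set b := γ.1 0 1 with hb
      set c := γ.1 1 0 with hc
      set d := γ.1 1 1 with hd
      have E2' : A*a*b + B*b*c + C*c*d = 0 := by
        have h2 : 2*(A*a*b + B*b*c + C*c*d) = 0 := by linear_combination E2 - B*hdet
        linarith only [h2]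
      have hX : A*a + B*c = d*A := by
        linear_combination d*E1 - c*E2' - (A*a+B*c)*hdet
      have hY : B*b + C*d = a*C := by
        linear_combination a*E3 - b*E2' - (B*b+C*d)*hdet
      have hZ : A*b + C*c = 0 := by
        have z1 : B*(A*b + C*c) = 0 := by linear_combination C*hX + A*hY
        have z2 : d*A*(A*b + C*c) = 0 := by
          linear_combination A*E2' + C*c*hX - (A*b+C*c)*hX
        have z3 : a*C*(A*b + C*c) = 0 := by
          linear_combination C*E2' + A*b*hY - (A*b+C*c)*hY
        by_contra hne
        have hB0 : B = 0 := by
          rcases mul_eq_zero.mp z1 with h | h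
          · exact h
          · exact absurd h hne
        have hd0 : d = 0 := by
          rcases mul_eq_zero.mp z2 with h | h
          · rcases mul_eq_zero.mp h with h' | h'
            · exact h'
            · exact absurd h' hA
          · exact absurd h hne
        have ha0 : a = 0 := by
          rcases mul_eq_zero.mp z3 with h | h
          · rcases mul_eq_zero.mp h with h' | h'
            · exact h'
            · exact absurd h' hC
          · exact absurd h hne
        rw [ha0, hB0] at E1
        have hac : A*C = (C*c)^2 := by linear_combination (-C)*E1
        have h5 : 0 ≤ (C*c)^2 := sq_nonneg _
        have hB2 : B^2 = 0 := by rw [hB0]; ring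
        linarith only [hDpos, hac, h5, hB2]
      have hdvdBc : A ∣ B*c := ⟨d - a, by linear_combination hX⟩
      have hdvdCc : A ∣ C*c := ⟨-b, by linear_combination hZ⟩
      have hdvd : A ∣ c := by
        have e1 := Int.gcd_eq_gcd_ab A (Int.gcd B C)
        rw [hg1] at e1
        have e2 := Int.gcd_eq_gcd_ab B C
        have key : c = A*(c*Int.gcdA A (Int.gcd B C))
            + (B*c)*(Int.gcdB A (Int.gcd B C) * Int.gcdA B C)
            + (C*c)*(Int.gcdB A (Int.gcd B C) * Int.gcdB B C) := by
          push_cast at e1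
          linear_combination c*e1 + c*(Int.gcdB A (Int.gcd B C))*e2
        rw [key]
        exact dvd_add (dvd_add (Dvd.intro _ rfl) (hdvdBc.mul_right _)) (hdvdCc.mul_right _)
      obtain ⟨u, hu⟩ := hdvd
      have hbv : b = -C*u := by
        have : A*b = A*(-C*u) := by rw [hu] at hZ; linear_combination hZ
        exact mul_left_cancel₀ hA this
      have hdv : d = a + B*u := by
        have : A*d = A*(a + B*u) := by rw [hu] at hX; linear_combination -hX
        exact mul_left_cancel₀ hA this
      have hmat : (γ : Matrix (Fin 2) (Fin 2) ℤ) = bmat A B C a u := by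
        ext i j
        fin_cases i <;> fin_cases j <;> simp [bmat, ← ha, ← hb, ← hc, ← hd]
        · linear_combination hbv
        · linear_combination hu
        · linear_combination hdv
      have hsol : a*(a+B*u) + A*C*u^2 = 1 := by
        rw [hbv, hdv, hu] at hdet
        linear_combination hdet
      obtain ⟨k, hk⟩ := classify a u hsol
      exact ⟨k, by rwa [hmat]⟩
    · rintro ⟨k, hk⟩
      have := actForm_congr γ (γq^k) (A, B, C) hk
      rw [this, fixzpow]
end

section
/- Let q₁, q₂ be PIBQFs, let γᵢ := γ_{qᵢ} be their invariant automorphs, set Γ = SL(2,ℤ) and Γᵢ := {±γᵢᵏ : k ∈ ℤ} ⊆ Γ. Then the assignment σ ↦ (σγ₁σ⁻¹, γ₂) induces a well-defined bijection from the set of double cosets Γ₂σΓ₁ ∈ Γ₂\Γ/Γ₁ satisfying det((σγ₁σ⁻¹)γ₂ − γ₂(σγ₁σ⁻¹)) > 0 onto the set of pairs {(δ₁,δ₂) : δ₁ is Γ-conjugate to γ₁, δ₂ is Γ-conjugate to γ₂, det(δ₁δ₂ − δ₂δ₁) > 0} modulo simultaneous conjugation ((δ₁,δ₂) ∼ (αδ₁α⁻¹,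 αδ₂α⁻¹) for α ∈ Γ). -/
/-- The matrix of the invariant automorph of `q = [A,B,C]` built from a Pell
solution `(T,U)`: `[[(T-BU)/2, -CU],[AU, (T+BU)/2]]`. -/
def autMat (T U : ℤ) (q : BQF) : Matrix (Fin 2) (Fin 2) ℤ :=
  !![(T - q.2.1 * U) / 2, -q.2.2 * U; q.1 * U, (T + q.2.1 * U) / 2]

/-- `det(ab - ba)` for `a, b ∈ SL(2,ℤ)`; positivity expresses that the root
geodesics of the hyperbolic matrices `a, b` intersect uniquely. -/
def detComm (a b : SL2Z) : ℤ :=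
  ((a : Matrix (Fin 2) (Fin 2) ℤ) * (b : Matrix (Fin 2) (Fin 2) ℤ)
    - (b : Matrix (Fin 2) (Fin 2) ℤ) * (a : Matrix (Fin 2) (Fin 2) ℤ)).det

/-- Elements `σ ∈ Γ = SL(2,ℤ)` with `det(σγ₁σ⁻¹·γ₂ - γ₂·σγ₁σ⁻¹) > 0`. -/
def DCosetDom (γ₁ γ₂ : SL2Z) : Type :=
  {σ : SL2Z // 0 < detComm (σ * γ₁ * σ⁻¹) γ₂}

/-- The double coset relation: `σ' ∈ Γ₂ σ Γ₁` with `Γᵢ = {±γᵢᵏ : k ∈ ℤ}`. -/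
def dcRel (γ₁ γ₂ : SL2Z) (x y : DCosetDom γ₁ γ₂) : Prop :=
  ∃ j k : ℤ,
    (y.1 : Matrix (Fin 2) (Fin 2) ℤ) =
      ((γ₂ ^ j * x.1 * γ₁ ^ k : SL2Z) : Matrix (Fin 2) (Fin 2) ℤ) ∨
    (y.1 : Matrix (Fin 2) (Fin 2) ℤ) =
      -((γ₂ ^ j * x.1 * γ₁ ^ k : SL2Z) : Matrix (Fin 2) (Fin 2) ℤ)

/-- Pairs `(δ₁,δ₂)` with `δᵢ` conjugate to `γᵢ` whose root geodesics
intersect. -/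
def ConjPairSet (γ₁ γ₂ : SL2Z) : Type :=
  {p : SL2Z × SL2Z // (∃ α : SL2Z, p.1 = α * γ₁ * α⁻¹) ∧
    (∃ α : SL2Z, p.2 = α * γ₂ * α⁻¹) ∧ 0 < detComm p.1 p.2}

/-- Simultaneous conjugation of pairs. -/
def simConjRel (γ₁ γ₂ : SL2Z) (x y : ConjPairSet γ₁ γ₂) : Prop :=
  ∃ α : SL2Z, y.1.1 = α * x.1.1 * α⁻¹ ∧ y.1.2 = α * x.1.2 * α⁻¹

/-!
The assignment `σ ↦ (σγ₁σ⁻¹, γ₂)` respects double cosets and is onto for purely group-theoretic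
reasons; it is injective as soon as the centralizer of each `γᵢ` in `SL(2,ℤ)` is `±γᵢ^ℤ`.

For `q = [A,B,C]` write `γ_q = P + U W` with `W = [[0,-C],[A,B]]`. A matrix commuting with `γ_q`
commutes with `W`, so by primitivity of `q` it is `a + u W`; its determinant being `1` means that
`t = 2a + Bu` and `u` solve `t² - D u² = 4`. For `t, u > 0`, multiplying by `γ_q⁻¹` yields a
solution with `u`-coordinate in `[0, u)` because `(T,U)` is the least positive solution, so descent
on `|u|` shows that every solution is `±γ_q^k`.
-/

/-- The matrix `a + u W` with `W = [[0, -C], [A, B]]`, a root of `X² - B X + A C`; these matrices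
form a commutative ring containing the invariant automorph of `q = [A,B,C]`. -/
def quadMat (q : BQF) (a u : ℤ) : Matrix (Fin 2) (Fin 2) ℤ :=
  !![a, -q.2.2 * u; q.1 * u, a + q.2.1 * u]

lemma quadMat_mul (q : BQF) (a₁ u₁ a₂ u₂ : ℤ) :
    quadMat q a₁ u₁ * quadMat q a₂ u₂ =
      quadMat q (a₁ * a₂ - q.1 * q.2.2 * u₁ * u₂) (a₁ * u₂ + a₂ * u₁ + q.2.1 * u₁ * u₂) := by
  rw [quadMat, quadMat, quadMat, Matrix.mul_fin_two]
  congr 1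
  ring_nf

lemma adjugate_quadMat (q : BQF) (a u : ℤ) :
    (quadMat q a u).adjugate = quadMat q (a + q.2.1 * u) (-u) := by
  rw [quadMat, quadMat, Matrix.adjugate_fin_two_of]
  congr 1
  ring_nf

lemma neg_quadMat (q : BQF) (a u : ℤ) : -quadMat q a u = quadMat q (-a) (-u) := by
  rw [quadMat, quadMat, Matrix.neg_of]
  congr 1
  simp only [Matrix.neg_cons, Matrix.neg_empty]
  ring_nf

lemma quadMat_one_zero (q : BQF) : quadMat q 1 0 = 1 := by
  ext i j; fin_cases i <;> fin_cases j <;> simp [quadMat]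

lemma det_quadMat (q : BQF) (a u : ℤ) :
    (quadMat q a u).det = a ^ 2 + q.2.1 * a * u + q.1 * q.2.2 * u ^ 2 := by
  rw [quadMat, Matrix.det_fin_two_of]; ring

lemma exists_autMat_eq_quadMat {q : BQF} {T U : ℤ} (hPell : T ^ 2 - disc q * U ^ 2 = 4) :
    ∃ P, T = 2 * P + q.2.1 * U ∧ autMat T U q = quadMat q P U := by
  obtain ⟨A, B, C⟩ := q
  simp only [disc] at hPell
  have hsq : Even ((T - B * U) ^ 2) :=
    ⟨2 * (1 - A * C * U ^ 2) - B * U * (T - B * U), by linear_combination hPell⟩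
  obtain ⟨P, hP⟩ := (Int.even_pow.mp hsq).1
  have e₁ : (T - B * U) / 2 = P := by omega
  have e₂ : (T + B * U) / 2 = P + B * U := by omega
  refine ⟨P, by linarith, ?_⟩
  simp only [autMat, quadMat, e₁, e₂]

lemma IsPrimitiveBQF.exists_eq_mul {q : BQF} (hq : IsPrimitiveBQF q) {x y z : ℤ}
    (hxy : q.1 * y = q.2.1 * x) (hxz : q.1 * z = q.2.2 * x) (hyz : q.2.1 * z = q.2.2 * y) :
    ∃ u, x = q.1 * u ∧ y = q.2.1 * u ∧ z = q.2.2 * u := by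
  obtain ⟨A, B, C⟩ := q
  obtain ⟨r, s, hrs⟩ := Int.isCoprime_iff_gcd_eq_one.mpr hq
  have hBC := Int.gcd_eq_gcd_ab B C
  set g := Int.gcdA B C
  set h := Int.gcdB B C
  dsimp only at hxy hxz hyz hrs ⊢
  refine ⟨r * x + s * (g * y + h * z), ?_, ?_, ?_⟩
  · linear_combination (-x) * hrs + x * s * hBC - s * g * hxy - s * h * hxz
  · linear_combination (-y) * hrs + y * s * hBC + r * hxy - s * h * hyz
  · linear_combination (-z) * hrs + z * s * hBC + r * hxz + s * g * hyz

lemma exists_eq_quadMat_of_commute {q : BQF} (hq : IsPrimitiveBQF q) {P U : ℤ} (hU : U ≠ 0)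
    {M : Matrix (Fin 2) (Fin 2) ℤ} (hM : Commute M (quadMat q P U)) :
    ∃ a u, M = quadMat q a u := by
  have h := congrFun₂ hM.eq
  have e₀₀ := h 0 0
  have e₀₁ := h 0 1
  have e₁₀ := h 1 0
  simp only [quadMat, Matrix.mul_apply, Fin.sum_univ_two, Matrix.of_apply, Matrix.cons_val',
    Matrix.cons_val_zero, Matrix.cons_val_one, Matrix.empty_val', Matrix.cons_val_fin_one]
    at e₀₀ e₀₁ e₁₀
  obtain ⟨u, hc, hd, hb⟩ := hq.exists_eq_mul (x := M 1 0) (y := M 1 1 - M 0 0) (z := -M 0 1)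
    (mul_left_cancel₀ hU (by linear_combination e₁₀))
    (mul_left_cancel₀ hU (by linear_combination -e₀₀))
    (mul_left_cancel₀ hU (by linear_combination -e₀₁))
  have hb' : M 0 1 = -q.2.2 * u := by linarith
  have hd' : M 1 1 = M 0 0 + q.2.1 * u := by linarith
  refine ⟨M 0 0, u, ?_⟩
  ext i j
  fin_cases i <;> fin_cases j <;> simp [quadMat, hb', hc, hd']

/-- The group `Γ_γ = {±γᵏ : k ∈ ℤ}`. -/
def signedZPowers (γ : SL2Z) : Subgroup SL2Z where
  carrier := {M | ∃ k : ℤ, M = γ ^ k ∨ M = -γ ^ k}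
  mul_mem' := by
    rintro _ _ ⟨j, rfl | rfl⟩ ⟨k, rfl | rfl⟩ <;> exact ⟨j + k, by simp [zpow_add]⟩
  one_mem' := ⟨0, Or.inl (zpow_zero γ).symm⟩
  inv_mem' := by
    rintro _ ⟨k, rfl | rfl⟩ <;> exact ⟨-k, by simp [zpow_neg]⟩

lemma self_mem_signedZPowers (γ : SL2Z) : γ ∈ signedZPowers γ := ⟨1, Or.inl (zpow_one γ).symm⟩

lemma neg_mem_signedZPowers {γ M : SL2Z} (hM : M ∈ signedZPowers γ) : -M ∈ signedZPowers γ := by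
  obtain ⟨k, rfl | rfl⟩ := hM
  · exact ⟨k, Or.inr rfl⟩
  · exact ⟨k, Or.inl (neg_neg _)⟩

lemma neg_mem_signedZPowers_iff {γ M : SL2Z} : -M ∈ signedZPowers γ ↔ M ∈ signedZPowers γ :=
  ⟨fun h => neg_neg M ▸ neg_mem_signedZPowers h, neg_mem_signedZPowers⟩

lemma signedZPowers_le_centralizer (γ : SL2Z) :
    signedZPowers γ ≤ Subgroup.centralizer {γ} := by
  rintro _ ⟨k, rfl | rfl⟩ <;>
    simp [Subgroup.mem_centralizer_singleton_iff, ← zpow_add_one, ← zpow_one_add, add_comm]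

/-- `(T u - t U) / 2` is the `u`-coordinate of `(t, u) · (T, U)⁻¹` in the group of solutions of
`x² - D y² = 4`. -/
lemma pell_descent_bounds {D T U t u : ℤ} (hD : 0 < D) (hT : 0 < T) (hU : 0 < U) (ht : 0 < t)
    (hUu : U ≤ u) (hPell : T ^ 2 - D * U ^ 2 = 4) (hpell : t ^ 2 - D * u ^ 2 = 4) :
    0 ≤ T * u - t * U ∧ T * u - t * U < 2 * u := by
  have hu : 0 < u := hU.trans_le hUu
  have hprod : (T * u - t * U) * (T * u + t * U) = 4 * (u ^ 2 - U ^ 2) := by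
    linear_combination u ^ 2 * hPell - U ^ 2 * hpell
  have hT2 : 2 < T := by nlinarith
  have hsq : (u * (T - 2)) ^ 2 < (t * U) ^ 2 := by
    nlinarith [show (t * U) ^ 2 - (u * (T - 2)) ^ 2 = 4 * U ^ 2 + 4 * u ^ 2 * (T - 2) by
      linear_combination U ^ 2 * hpell - u ^ 2 * hPell]
  have hlt := lt_of_pow_lt_pow_left₀ 2 (by positivity) hsq
  constructor
  · nlinarith [mul_pos hT hu, mul_pos ht hU]
  · linarith

section Descent

variable {q : BQF} {M : SL2Z} {a u : ℤ}

lemma pell_of_coe_eq_quadMat (hM : (M : Matrix (Fin 2) (Fin 2) ℤ) = quadMat q a u) :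
    (2 * a + q.2.1 * u) ^ 2 - disc q * u ^ 2 = 4 := by
  have hdet := M.det_coe
  rw [hM, det_quadMat] at hdet
  simp only [disc]
  linear_combination 4 * hdet

lemma coe_neg_eq_quadMat (hM : (M : Matrix (Fin 2) (Fin 2) ℤ) = quadMat q a u) :
    ((-M : SL2Z) : Matrix (Fin 2) (Fin 2) ℤ) = quadMat q (-a) (-u) := by
  rw [Matrix.SpecialLinearGroup.coe_neg, hM, neg_quadMat]

lemma coe_inv_eq_quadMat (hM : (M : Matrix (Fin 2) (Fin 2) ℤ) = quadMat q a u) :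
    ((M⁻¹ : SL2Z) : Matrix (Fin 2) (Fin 2) ℤ) = quadMat q (a + q.2.1 * u) (-u) := by
  rw [Matrix.SpecialLinearGroup.coe_inv, hM, adjugate_quadMat]

lemma coe_mul_inv_eq_quadMat {γ : SL2Z} {P U : ℤ}
    (hγ : (γ : Matrix (Fin 2) (Fin 2) ℤ) = quadMat q P U)
    (hM : (M : Matrix (Fin 2) (Fin 2) ℤ) = quadMat q a u) :
    ((M * γ⁻¹ : SL2Z) : Matrix (Fin 2) (Fin 2) ℤ) =
      quadMat q (a * (P + q.2.1 * U) + q.1 * q.2.2 * u * U) (P * u - a * U) := by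
  rw [Matrix.SpecialLinearGroup.coe_mul, hM, coe_inv_eq_quadMat hγ, quadMat_mul]
  congr 1 <;> ring

lemma mem_signedZPowers_of_coe_eq_quadMat_zero (γ : SL2Z)
    (hM : (M : Matrix (Fin 2) (Fin 2) ℤ) = quadMat q a 0) : M ∈ signedZPowers γ := by
  have ha : a ^ 2 = 1 := by linarith [pell_of_coe_eq_quadMat hM]
  have of_eq_one : ∀ {N : SL2Z}, (N : Matrix (Fin 2) (Fin 2) ℤ) = quadMat q 1 0 →
      N ∈ signedZPowers γ := fun hN =>
    (Subtype.ext (hN.trans (quadMat_one_zero q)) : _ = (1 : SL2Z)) ▸ one_mem _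
  rcases sq_eq_one_iff.mp ha with rfl | rfl
  · exact of_eq_one hM
  · rw [← neg_mem_signedZPowers_iff]
    exact of_eq_one (by rw [coe_neg_eq_quadMat hM, neg_neg, neg_zero])

end Descent

/-- Descent step: `M γ⁻¹` has a smaller `u`-coordinate. -/
lemma mem_signedZPowers_of_pos {q : BQF} (hD : 0 < disc q) {T U P : ℤ}
    (hT : 0 < T) (hU : 0 < U) (hPell : T ^ 2 - disc q * U ^ 2 = 4)
    (hmin : ∀ t u : ℤ, 0 < t → 0 < u → t ^ 2 - disc q * u ^ 2 = 4 → U ≤ u)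
    (hTP : T = 2 * P + q.2.1 * U) {γ : SL2Z}
    (hγ : (γ : Matrix (Fin 2) (Fin 2) ℤ) = quadMat q P U) {M : SL2Z} {a u : ℤ}
    (hM : (M : Matrix (Fin 2) (Fin 2) ℤ) = quadMat q a u) (hu : 0 < u)
    (ht : 0 < 2 * a + q.2.1 * u)
    (ih : ∀ (N : SL2Z) (b v : ℤ), (N : Matrix (Fin 2) (Fin 2) ℤ) = quadMat q b v →
      v.natAbs < u.natAbs → N ∈ signedZPowers γ) :
    M ∈ signedZPowers γ := by
  have hpell := pell_of_coe_eq_quadMat hM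
  obtain ⟨h₀, hlt⟩ := pell_descent_bounds hD hT hU ht (hmin _ _ ht hu hpell) hPell hpell
  have hlt' : (P * u - a * U).natAbs < u.natAbs := by
    have : 2 * (P * u - a * U) = T * u - (2 * a + q.2.1 * u) * U := by rw [hTP]; ring
    omega
  have := mul_mem (ih _ _ _ (coe_mul_inv_eq_quadMat hγ hM) hlt') (self_mem_signedZPowers γ)
  rwa [inv_mul_cancel_right] at this

theorem mem_signedZPowers_of_coe_eq_quadMat {q : BQF} (hD : 0 < disc q) {T U P : ℤ}
    (hT : 0 < T) (hU : 0 < U) (hPell : T ^ 2 - disc q * U ^ 2 = 4)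
    (hmin : ∀ t u : ℤ, 0 < t → 0 < u → t ^ 2 - disc q * u ^ 2 = 4 → U ≤ u)
    (hTP : T = 2 * P + q.2.1 * U) {γ : SL2Z}
    (hγ : (γ : Matrix (Fin 2) (Fin 2) ℤ) = quadMat q P U) {M : SL2Z} {a u : ℤ}
    (hM : (M : Matrix (Fin 2) (Fin 2) ℤ) = quadMat q a u) : M ∈ signedZPowers γ := by
  induction hn : u.natAbs using Nat.strong_induction_on generalizing M a u with
  | _ n ih =>
  subst hn
  have of_pos {N : SL2Z} {b v : ℤ} (hN : (N : Matrix (Fin 2) (Fin 2) ℤ) = quadMat q b v)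
      (hv : v.natAbs = u.natAbs) (hv₀ : 0 < v) (ht : 0 < 2 * b + q.2.1 * v) :
      N ∈ signedZPowers γ :=
    mem_signedZPowers_of_pos hD hT hU hPell hmin hTP hγ hN hv₀ ht
      fun _ _ _ hN' hlt => ih _ (hv ▸ hlt) hN' rfl
  have ht : 2 * a + q.2.1 * u ≠ 0 := fun h => by nlinarith [h ▸ pell_of_coe_eq_quadMat hM]
  rcases eq_or_ne u 0 with rfl | hu
  · exact mem_signedZPowers_of_coe_eq_quadMat_zero γ hM
  -- `M ↦ -M` negates both `t = 2a + Bu` and `u`, while `M ↦ M⁻¹` negates only `u`.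
  rcases hu.lt_or_gt with hu | hu <;> rcases ht.lt_or_gt with ht | ht
  · rw [← neg_mem_signedZPowers_iff]
    exact of_pos (coe_neg_eq_quadMat hM) (by omega) (by omega) (by linarith)
  · rw [← inv_mem_iff]
    exact of_pos (coe_inv_eq_quadMat hM) (by omega) (by omega) (by linarith)
  · rw [← neg_mem_signedZPowers_iff, ← inv_mem_iff]
    exact of_pos (coe_inv_eq_quadMat (coe_neg_eq_quadMat hM)) (by omega) (by omega) (by linarith)
  · exact of_pos hM rfl hu ht

theorem centralizer_autMat {q : BQF} (hq : IsPIBQF q) {T U : ℤ} (hT : 0 < T) (hU : 0 < U)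
    (hPell : T ^ 2 - disc q * U ^ 2 = 4)
    (hmin : ∀ t u : ℤ, 0 < t → 0 < u → t ^ 2 - disc q * u ^ 2 = 4 → U ≤ u)
    {γ : SL2Z} (hγ : (γ : Matrix (Fin 2) (Fin 2) ℤ) = autMat T U q) :
    Subgroup.centralizer {γ} = signedZPowers γ := by
  obtain ⟨P, hTP, hγP⟩ := exists_autMat_eq_quadMat hPell
  rw [hγP] at hγ
  refine le_antisymm (fun M hM => ?_) (signedZPowers_le_centralizer γ)
  have hcomm : Commute (M : Matrix (Fin 2) (Fin 2) ℤ) (quadMat q P U) :=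
    hγ ▸ Commute.map (Subgroup.mem_centralizer_singleton_iff.mp hM)
      Matrix.SpecialLinearGroup.coeMonoidHom
  obtain ⟨a, u, hMau⟩ := exists_eq_quadMat_of_commute hq.1 hU.ne' hcomm
  exact mem_signedZPowers_of_coe_eq_quadMat hq.2.1 hT hU hPell hmin hTP hγ hMau

lemma detComm_conj (β a b : SL2Z) : detComm (β * a * β⁻¹) (β * b * β⁻¹) = detComm a b := by
  have key : ∀ x y : SL2Z, ((β * x * β⁻¹ * (β * y * β⁻¹) : SL2Z) : Matrix (Fin 2) (Fin 2) ℤ) =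
      β * (x * y : SL2Z) * (β⁻¹ : SL2Z) := fun x y => by
    rw [show (β * x * β⁻¹ * (β * y * β⁻¹) : SL2Z) = β * (x * y) * β⁻¹ by group]; rfl
  simp only [detComm]
  rw [← Matrix.SpecialLinearGroup.coe_mul, ← Matrix.SpecialLinearGroup.coe_mul, key, key,
    ← sub_mul, ← mul_sub, Matrix.det_mul, Matrix.det_mul, Matrix.SpecialLinearGroup.det_coe,
    Matrix.SpecialLinearGroup.det_coe, one_mul, mul_one]
  rfl

lemma simConjRel_equivalence (γ₁ γ₂ : SL2Z) : Equivalence (simConjRel γ₁ γ₂) where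
  refl _ := ⟨1, by group, by group⟩
  symm := fun ⟨α, h₁, h₂⟩ => ⟨α⁻¹, by rw [h₁]; group, by rw [h₂]; group⟩
  trans := fun ⟨α, h₁, h₂⟩ ⟨β, h₁', h₂'⟩ =>
    ⟨β * α, by rw [h₁', h₁]; group, by rw [h₂', h₂]; group⟩

lemma dcRel_iff {γ₁ γ₂ : SL2Z} {x y : DCosetDom γ₁ γ₂} :
    dcRel γ₁ γ₂ x y ↔ ∃ α ∈ signedZPowers γ₂, ∃ β ∈ signedZPowers γ₁, y.1 = α * x.1 * β := by
  obtain ⟨x, hx⟩ := x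
  obtain ⟨y, hy⟩ := y
  simp only [dcRel, ← Matrix.SpecialLinearGroup.coe_neg]
  constructor
  · rintro ⟨j, k, h | h⟩
    · exact ⟨_, ⟨j, Or.inl rfl⟩, _, ⟨k, Or.inl rfl⟩, Subtype.ext h⟩
    · exact ⟨_, ⟨j, Or.inr rfl⟩, _, ⟨k, Or.inl rfl⟩,
        (Subtype.ext h).trans (by rw [neg_mul, neg_mul])⟩
  · rintro ⟨_, ⟨j, rfl | rfl⟩, _, ⟨k, rfl | rfl⟩, rfl⟩ <;> exact ⟨j, k, by simp⟩

section DoubleCosets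

variable {γ₁ γ₂ : SL2Z}

def conjPairOf (σ : DCosetDom γ₁ γ₂) : ConjPairSet γ₁ γ₂ :=
  ⟨(σ.1 * γ₁ * σ.1⁻¹, γ₂), ⟨σ.1, rfl⟩, ⟨1, by simp⟩, σ.2⟩

lemma simConjRel_conjPairOf_of_dcRel {x y : DCosetDom γ₁ γ₂} (h : dcRel γ₁ γ₂ x y) :
    simConjRel γ₁ γ₂ (conjPairOf x) (conjPairOf y) := by
  obtain ⟨α, hα, β, hβ, hy⟩ := dcRel_iff.mp h
  have hαγ₂ : α * γ₂ * α⁻¹ = γ₂ := mul_inv_eq_of_eq_mul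
    (Subgroup.mem_centralizer_singleton_iff.mp (signedZPowers_le_centralizer _ hα))
  have hβγ₁ : β * γ₁ * β⁻¹ = γ₁ := mul_inv_eq_of_eq_mul
    (Subgroup.mem_centralizer_singleton_iff.mp (signedZPowers_le_centralizer _ hβ))
  refine ⟨α, ?_, hαγ₂.symm⟩
  change y.1 * γ₁ * y.1⁻¹ = α * (x.1 * γ₁ * x.1⁻¹) * α⁻¹
  calc y.1 * γ₁ * y.1⁻¹ = α * x.1 * (β * γ₁ * β⁻¹) * x.1⁻¹ * α⁻¹ := by rw [hy]; group
    _ = α * (x.1 * γ₁ * x.1⁻¹) * α⁻¹ := by rw [hβγ₁]; group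

lemma dcRel_of_simConjRel_conjPairOf (h₁ : Subgroup.centralizer {γ₁} ≤ signedZPowers γ₁)
    (h₂ : Subgroup.centralizer {γ₂} ≤ signedZPowers γ₂) {x y : DCosetDom γ₁ γ₂}
    (h : simConjRel γ₁ γ₂ (conjPairOf x) (conjPairOf y)) : dcRel γ₁ γ₂ x y := by
  obtain ⟨α, hconj₁, hconj₂⟩ := h
  change y.1 * γ₁ * y.1⁻¹ = α * (x.1 * γ₁ * x.1⁻¹) * α⁻¹ at hconj₁
  change γ₂ = α * γ₂ * α⁻¹ at hconj₂
  have hα : α ∈ signedZPowers γ₂ :=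
    h₂ (Subgroup.mem_centralizer_singleton_iff.mpr (mul_inv_eq_iff_eq_mul.mp hconj₂.symm))
  have hβγ₁ : x.1⁻¹ * α⁻¹ * y.1 * γ₁ * (x.1⁻¹ * α⁻¹ * y.1)⁻¹ = γ₁ := by
    calc _ = x.1⁻¹ * α⁻¹ * (y.1 * γ₁ * y.1⁻¹) * α * x.1 := by group
      _ = γ₁ := by rw [hconj₁]; group
  have hβ : x.1⁻¹ * α⁻¹ * y.1 ∈ signedZPowers γ₁ :=
    h₁ (Subgroup.mem_centralizer_singleton_iff.mpr (mul_inv_eq_iff_eq_mul.mp hβγ₁))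
  exact dcRel_iff.mpr ⟨α, hα, _, hβ, by group⟩

lemma exists_simConjRel_conjPairOf (p : ConjPairSet γ₁ γ₂) :
    ∃ σ : DCosetDom γ₁ γ₂, simConjRel γ₁ γ₂ (conjPairOf σ) p := by
  obtain ⟨⟨δ₁, δ₂⟩, ⟨α₁, hδ₁⟩, ⟨α₂, hδ₂⟩, hpos⟩ := p
  dsimp only at hδ₁ hδ₂ hpos
  subst hδ₁ hδ₂
  have hσ : 0 < detComm (α₂⁻¹ * α₁ * γ₁ * (α₂⁻¹ * α₁)⁻¹) γ₂ := by
    rw [← detComm_conj α₂ _ γ₂]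
    convert hpos using 2
    group
  exact ⟨⟨α₂⁻¹ * α₁, hσ⟩, α₂, by change _ = α₂ * (α₂⁻¹ * α₁ * γ₁ * (α₂⁻¹ * α₁)⁻¹) * α₂⁻¹; group,
    rfl⟩

variable (γ₁ γ₂) in
def doubleCosetToConjPair : Quot (dcRel γ₁ γ₂) → Quot (simConjRel γ₁ γ₂) :=
  Quot.lift (fun σ => Quot.mk _ (conjPairOf σ)) fun _ _ h =>
    Quot.sound (simConjRel_conjPairOf_of_dcRel h)

theorem doubleCosetToConjPair_bijective (h₁ : Subgroup.centralizer {γ₁} ≤ signedZPowers γ₁)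
    (h₂ : Subgroup.centralizer {γ₂} ≤ signedZPowers γ₂) :
    Function.Bijective (doubleCosetToConjPair γ₁ γ₂) := by
  constructor
  · rintro ⟨x⟩ ⟨y⟩ h
    have := (simConjRel_equivalence γ₁ γ₂).eqvGen_iff.mp (Quot.eq.mp h)
    exact Quot.sound (dcRel_of_simConjRel_conjPairOf h₁ h₂ this)
  · rintro ⟨p⟩
    obtain ⟨σ, hσ⟩ := exists_simConjRel_conjPairOf p
    exact ⟨Quot.mk _ σ, Quot.sound hσ⟩

end DoubleCosets

/-- Propositions 3 and 4 of the paper.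
For invariant automorphs `γ₁, γ₂` of PIBQFs, `σ ↦ (σγ₁σ⁻¹, γ₂)` induces a
bijection from the double cosets `Γ₂\Γ/Γ₁` whose associated root geodesics
intersect, onto pairs of conjugates of `(γ₁,γ₂)` with intersecting root
geodesics, modulo simultaneous conjugation. -/
theorem doubleCoset_bijection
    (q₁ q₂ : BQF) (h₁ : IsPIBQF q₁) (h₂ : IsPIBQF q₂)
    (T₁ U₁ T₂ U₂ : ℤ) (hT₁ : 0 < T₁) (hU₁ : 0 < U₁) (hT₂ : 0 < T₂) (hU₂ : 0 < U₂)
    (hPell₁ : T₁ ^ 2 - disc q₁ * U₁ ^ 2 = 4)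
    (hPell₂ : T₂ ^ 2 - disc q₂ * U₂ ^ 2 = 4)
    (hmin₁ : ∀ t u : ℤ, 0 < t → 0 < u → t ^ 2 - disc q₁ * u ^ 2 = 4 → T₁ ≤ t ∧ U₁ ≤ u)
    (hmin₂ : ∀ t u : ℤ, 0 < t → 0 < u → t ^ 2 - disc q₂ * u ^ 2 = 4 → T₂ ≤ t ∧ U₂ ≤ u)
    (γ₁ γ₂ : SL2Z)
    (hγ₁ : (γ₁ : Matrix (Fin 2) (Fin 2) ℤ) = autMat T₁ U₁ q₁)
    (hγ₂ : (γ₂ : Matrix (Fin 2) (Fin 2) ℤ) = autMat T₂ U₂ q₂) :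
    ∃ f : Quot (dcRel γ₁ γ₂) → Quot (simConjRel γ₁ γ₂),
      Function.Bijective f ∧
      ∀ (σ : SL2Z) (hσ : 0 < detComm (σ * γ₁ * σ⁻¹) γ₂),
        f (Quot.mk (dcRel γ₁ γ₂) ⟨σ, hσ⟩) =
          Quot.mk (simConjRel γ₁ γ₂)
            ⟨(σ * γ₁ * σ⁻¹, γ₂), ⟨σ, rfl⟩, ⟨1, by group⟩, hσ⟩ := by
  have hc₁ := centralizer_autMat h₁ hT₁ hU₁ hPell₁ (fun t u ht hu h => (hmin₁ t u ht hu h).2) hγ₁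
  have hc₂ := centralizer_autMat h₂ hT₂ hU₂ hPell₂ (fun t u ht hu h => (hmin₂ t u ht hu h).2) hγ₂
  exact ⟨doubleCosetToConjPair γ₁ γ₂, doubleCosetToConjPair_bijective hc₁.le hc₂.le,
    fun _ _ => rfl⟩
end
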